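/- arXiv:2601.18773 — 7 statements merged into one kernel-verified Lean document; each statement's English description precedes it below -/
import Mathlib

section
/- Fix l ∈ ℕ. For c ∈ ℝ, define (l+1)×(l+1) real matrices A₀(c) and A₁(c), indexed by {0,…,l}, with entries (A_b(c))_{i,j} = c^{j−i}/(j−i)! if j ≥ i and j−i ≡ b (mod 2), and 0 otherwise, for b ∈ {0,1}. Let c₁,…,c_m ∈ ℝ and a₀,…,a_l ∈ ℝ, let e₀ ∈ ℝ^{l+1} be the first standard basis vector and v_R = (a₀·0!, a₁·1!, …, a_l·l!)ᵀ. Then for every y ∈ 𝔽₂^m, e₀ᵀ · A_{y₁}(c₁) A_{y₂}(c₂) ⋯ A_{y_m}(c_m) · v_R = Σ_{j=0}^{l} a_j · j! · Σ_{μ ∈ ℤ_{≥0}^m, |μ| = j, μ ≡ y (mod 2)} c^μ / μ!. -/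
/-- The (l+1)×(l+1) matrix with entries `c^(j-i)/(j-i)!` for `j ≥ i` with
`j - i ≡ b (mod 2)`, and `0` otherwise. -/
noncomputable def Amat (l : ℕ) (b : ZMod 2) (c : ℝ) :
    Matrix (Fin (l + 1)) (Fin (l + 1)) ℝ :=
  Matrix.of fun i j =>
    if (i : ℕ) ≤ (j : ℕ) ∧ (((j : ℕ) - (i : ℕ) : ℕ) : ZMod 2) = b then
      c ^ ((j : ℕ) - (i : ℕ)) / (((j : ℕ) - (i : ℕ)).factorial : ℝ)
    else 0

noncomputable def S (m : ℕ) (c : Fin m → ℝ) (y : Fin m → ZMod 2) (d : ℕ) : ℝ :=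
  ∑ μ ∈ (Fintype.piFinset fun _ : Fin m => Finset.range (d + 1)).filter
      (fun μ : Fin m → ℕ => (∑ i, μ i) = d ∧ ∀ i, ((μ i : ZMod 2) = y i)),
    (∏ i, c i ^ μ i) / (∏ i, ((μ i).factorial : ℝ))

lemma S_zero (c : Fin 0 → ℝ) (y : Fin 0 → ZMod 2) (d : ℕ) :
    S 0 c y d = if d = 0 then 1 else 0 := by
  unfold S
  rcases eq_or_ne d 0 with h | h <;> simp [h, Finset.filter_eq_self, Finset.filter_false_of_mem]
  omega

lemma S_succ (m : ℕ) (c : Fin (m+1) → ℝ) (y : Fin (m+1) → ZMod 2) (d : ℕ) :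
    S (m+1) c y d = ∑ k ∈ Finset.range (d+1),
      if (k : ZMod 2) = y 0 then
        (c 0)^k / (k.factorial : ℝ) * S m (fun i => c i.succ) (fun i => y i.succ) (d - k)
      else 0 := by
  rw [← Finset.sum_filter]
  rw [S]
  simp only [S, Finset.mul_sum]
  rw [show (∑ k ∈ Finset.filter (fun k : ℕ => (k : ZMod 2) = y 0) (Finset.range (d+1)),
      ∑ ν ∈ (Fintype.piFinset fun _ : Fin m => Finset.range (d - k + 1)).filter
        (fun ν : Fin m → ℕ => (∑ i, ν i) = d - k ∧ ∀ i, ((ν i : ZMod 2) = y i.succ)),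
      (c 0)^k / (k.factorial : ℝ) * ((∏ i, c i.succ ^ ν i) / (∏ i, ((ν i).factorial : ℝ))))
    = ∑ p ∈ (Finset.filter (fun k : ℕ => (k : ZMod 2) = y 0) (Finset.range (d+1))).sigma
        (fun k => (Fintype.piFinset fun _ : Fin m => Finset.range (d - k + 1)).filter
          (fun ν : Fin m → ℕ => (∑ i, ν i) = d - k ∧ ∀ i, ((ν i : ZMod 2) = y i.succ))),
      (c 0)^p.1 / (p.1.factorial : ℝ) * ((∏ i, c i.succ ^ p.2 i) / (∏ i, ((p.2 i).factorial : ℝ)))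
    from (Finset.sum_sigma _ _
      (fun p : (Σ _ : ℕ, Fin m → ℕ) =>
        (c 0)^p.1 / (p.1.factorial : ℝ) *
          ((∏ i, c i.succ ^ p.2 i) / (∏ i, ((p.2 i).factorial : ℝ))))).symm]
  refine Finset.sum_nbij' (fun μ : Fin (m+1) → ℕ => (⟨μ 0, fun i => μ i.succ⟩ : Σ _ : ℕ, Fin m → ℕ))
      (fun p => Fin.cons p.1 p.2) ?_ ?_ ?_ ?_ ?_
  · intro μ hμ
    simp only [Finset.mem_sigma, Finset.mem_filter, Fintype.mem_piFinset, Finset.mem_range] at hμ ⊢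
    obtain ⟨hμr, hμs, hμy⟩ := hμ
    rw [Fin.sum_univ_succ] at hμs
    have hle : ∀ i : Fin m, μ i.succ ≤ ∑ r : Fin m, μ r.succ := fun i =>
      Finset.single_le_sum (f := fun r : Fin m => μ r.succ) (fun _ _ => Nat.zero_le _) (Finset.mem_univ i)
    refine ⟨⟨by omega, hμy 0⟩, fun i => by have := hle i; omega, by omega, fun i => hμy i.succ⟩
  · rintro ⟨k, ν⟩ hp
    simp only [Finset.mem_sigma, Finset.mem_filter, Fintype.mem_piFinset, Finset.mem_range] at hp ⊢
    obtain ⟨⟨hk, hky⟩, hν, hνs, hνy⟩ := hp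
    refine ⟨fun i => ?_, ?_, fun i => ?_⟩
    · refine Fin.cases ?_ (fun i => ?_) i <;> simp [hk]
      have := hν i; omega
    · rw [Fin.sum_univ_succ]; simp [hνs]; omega
    · refine Fin.cases ?_ (fun i => ?_) i <;> simp [hky, hνy]
  · intro μ hμ; exact Fin.cons_self_tail μ
  · rintro ⟨k, ν⟩ hp; simp
  · intro μ hμ
    rw [Fin.prod_univ_succ, Fin.prod_univ_succ, mul_div_mul_comm]

noncomputable def Fterm (m : ℕ) (c : Fin (m+1) → ℝ) (y : Fin (m+1) → ZMod 2)
    (iv jv : ℕ) (n : ℕ) : ℝ :=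
  (if iv ≤ n ∧ ((n - iv : ℕ) : ZMod 2) = y 0 then
      (c 0) ^ (n - iv) / (((n - iv).factorial : ℝ)) else 0) *
  (if n ≤ jv then S m (fun r => c r.succ) (fun r => y r.succ) (jv - n) else 0)

lemma Fterm_apply (m : ℕ) (c : Fin (m+1) → ℝ) (y : Fin (m+1) → ZMod 2)
    (iv jv n : ℕ) :
    ((if iv ≤ n ∧ ((n - iv : ℕ) : ZMod 2) = y 0 then
        (c 0) ^ (n - iv) / (((n - iv).factorial : ℝ)) else 0) *
      (if n ≤ jv then S m (fun r => c r.succ) (fun r => y r.succ) (jv - n) else 0))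
      = Fterm m c y iv jv n := rfl

lemma Fterm_zero (m : ℕ) (c : Fin (m+1) → ℝ) (y : Fin (m+1) → ZMod 2)
    {iv jv n : ℕ} (h : ¬(iv ≤ n ∧ n ≤ jv)) : Fterm m c y iv jv n = 0 := by
  unfold Fterm
  by_cases h1 : iv ≤ n ∧ ((n - iv : ℕ) : ZMod 2) = y 0
  · rw [if_neg (fun h2 => h ⟨h1.1, h2⟩), mul_zero]
  · rw [if_neg h1, zero_mul]

lemma prod_entry (l : ℕ) : ∀ (m : ℕ) (c : Fin m → ℝ) (y : Fin m → ZMod 2) (i j : Fin (l+1)),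
    ((List.ofFn fun t : Fin m => Amat l (y t) (c t)).prod) i j =
      if (i : ℕ) ≤ (j : ℕ) then S m c y ((j : ℕ) - (i : ℕ)) else 0 := by
  intro m
  induction m with
  | zero =>
    intro c y i j
    simp only [List.ofFn_zero, List.prod_nil, Matrix.one_apply, S_zero]
    rcases eq_or_ne i j with h | h
    · subst h; simp
    · rw [if_neg h]
      have hv : (i : ℕ) ≠ (j : ℕ) := fun hh => h (Fin.ext hh)
      split_ifs <;> first | rfl | omega
  | succ m ih =>
    intro c y i j
    rw [List.ofFn_succ, List.prod_cons, Matrix.mul_apply]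
    simp only [ih]
    simp only [Amat, Matrix.of_apply]
    simp only [Fterm_apply]
    rw [Fin.sum_univ_eq_sum_range (Fterm m c y (i : ℕ) (j : ℕ)) (l+1)]
    rcases le_or_gt (i : ℕ) (j : ℕ) with hij | hij
    · rw [if_pos hij, S_succ]
      have hsub : Finset.Icc (i : ℕ) (j : ℕ) ⊆ Finset.range (l+1) := by
        intro x hx
        simp only [Finset.mem_Icc] at hx
        simp only [Finset.mem_range]
        have := j.isLt
        omega
      rw [← Finset.sum_subset hsub (fun x _ hx => Fterm_zero m c y
        (by simp only [Finset.mem_Icc] at hx; omega))]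
      refine Finset.sum_nbij' (fun n => n - (i : ℕ)) (fun t => t + (i : ℕ)) ?_ ?_ ?_ ?_ ?_
      · intro n hn
        simp only [Finset.mem_Icc] at hn
        simp only [Finset.mem_range]
        omega
      · intro t ht
        simp only [Finset.mem_range] at ht
        simp only [Finset.mem_Icc]
        omega
      · intro n hn; simp only [Finset.mem_Icc] at hn; omega
      · intro t ht; simp only [Finset.mem_range] at ht; omega
      · intro n hn
        simp only [Finset.mem_Icc] at hn
        unfold Fterm
        have h2 : ((j : ℕ) - (i : ℕ)) - (n - (i : ℕ)) = (j : ℕ) - n := by omega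
        by_cases hp : ((n - (i : ℕ) : ℕ) : ZMod 2) = y 0
        · rw [if_pos ⟨hn.1, hp⟩, if_pos hn.2, if_pos hp, h2]
        · rw [if_neg (fun h => hp h.2), if_neg hp, zero_mul]
    · rw [if_neg (by omega)]
      exact Finset.sum_eq_zero fun n _ => Fterm_zero m c y (by omega)


/-- amplitude identity underlying the MPS form of the reference state. -/
theorem stmt_1 (l m : ℕ) (c : Fin m → ℝ) (a : ℕ → ℝ) (y : Fin m → ZMod 2) :
    ((List.ofFn fun i : Fin m => Amat l (y i) (c i)).prod.mulVec
        (fun j : Fin (l + 1) => a j * ((j : ℕ).factorial : ℝ))) 0 =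
      ∑ j ∈ Finset.range (l + 1),
        a j * (Nat.factorial j : ℝ) *
          ∑ μ ∈ (Fintype.piFinset fun _ : Fin m => Finset.range (j + 1)).filter
              (fun μ : Fin m → ℕ => (∑ i, μ i) = j ∧ ∀ i, ((μ i : ZMod 2) = y i)),
            (∏ i, c i ^ μ i) / (∏ i, ((μ i).factorial : ℝ)) := by
  simp only [Matrix.mulVec, dotProduct]
  simp only [prod_entry l m c y, Fin.val_zero, Nat.sub_zero, Nat.zero_le, if_true]
  rw [Fin.sum_univ_eq_sum_range (fun n => S m c y n * (a n * ((n.factorial : ℕ) : ℝ))) (l+1)]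
  refine Finset.sum_congr rfl fun n _ => ?_
  rw [S]
  ring
end

section
/- Let R be an associative unital ring that is an algebra over ℝ, and let z₁,…,z_m ∈ R be pairwise commuting elements satisfying z_i² = 1 for all i. Let c₁,…,c_{m+1} ∈ ℝ and set x = Σ_{i=1}^{m} c_i z_i + c_{m+1} z₁ z₂ ⋯ z_m. Then for every l ∈ ℕ, x^l = Σ_{y ∈ 𝔽₂^m} l! · ( I₁^l(y) + I₂^l(y) ) · z₁^{y₁} ⋯ z_m^{y_m}, where I₁^l(y) = Σ_{0 ≤ j ≤ l, j even} Σ_{μ ∈ ℤ_{≥0}^m, |μ| = l−j, μ ≡ y (mod 2)} (c^μ/μ!) · (c_{m+1}^j/j!) and I₂^l(y) = Σ_{0 ≤ j ≤ l, j odd} Σ_{μ ∈ ℤ_{≥0}^m, |μ| = l−j, μ ≡ y + 𝟙 (mod 2)} (c^μ/μ!) · (c_{m+1}^j/j!), with 𝟙 = (1,1,…,1) ∈ 𝔽₂^m. -/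
open Finset

private lemma even_cast2 {j : ℕ} (hj : Even j) : (j : ZMod 2) = 0 := by
  obtain ⟨k, rfl⟩ := hj; push_cast
  rw [← two_mul, show (2:ZMod 2) = 0 by decide, zero_mul]

private lemma odd_cast2 {j : ℕ} (hj : Odd j) : (j : ZMod 2) = 1 := by
  obtain ⟨k, rfl⟩ := hj; push_cast
  rw [show (2:ZMod 2) = 0 by decide, zero_mul, zero_add]

private lemma flip2 : ∀ a b : ZMod 2, (a + 1 = b ↔ a = b + 1) := by decide

private lemma sets_eq {m : ℕ} (l j : ℕ) (hjl : j ≤ l) (y : Fin m → ZMod 2)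
    (Q : (Fin m → ℕ) → Prop)
    [DecidablePred fun μ : Fin m → ℕ => (fun i => ((μ i + j : ℕ) : ZMod 2)) = y]
    [DecidablePred fun μ : Fin m → ℕ => (∑ i, μ i) = l - j ∧ Q μ]
    (hQ : ∀ μ : Fin m → ℕ, ((fun i => ((μ i + j : ℕ) : ZMod 2)) = y) ↔ Q μ) :
    (Finset.piAntidiag Finset.univ (l - j)).filter
        (fun μ : Fin m → ℕ => (fun i => ((μ i + j : ℕ) : ZMod 2)) = y)
      = (Fintype.piFinset fun _ : Fin m => Finset.range (l + 1)).filter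
          (fun μ : Fin m → ℕ => (∑ i, μ i) = l - j ∧ Q μ) := by
  ext μ
  simp only [mem_filter, mem_piAntidiag, Fintype.mem_piFinset, mem_range, hQ]
  constructor
  · rintro ⟨⟨hsum, -⟩, hpar⟩
    refine ⟨fun i => ?_, hsum, hpar⟩
    have h1 : μ i ≤ ∑ k, μ k := Finset.single_le_sum (fun _ _ => Nat.zero_le _) (mem_univ i)
    rw [hsum] at h1
    omega
  · rintro ⟨-, hsum, hpar⟩
    exact ⟨⟨hsum, fun i _ => mem_univ i⟩, hpar⟩

private lemma coeff_eq {m : ℕ} (l j : ℕ) (hj : j ≤ l) (μ : Fin m → ℕ) (hμ : ∑ i, μ i = l - j)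
    (c : Fin m → ℝ) (cm : ℝ) :
    (l.choose j : ℝ) * (Nat.multinomial univ μ : ℝ) * (∏ i, c i ^ μ i) * cm ^ j
      = (l.factorial : ℝ) *
        (((∏ i, c i ^ μ i) / (∏ i, ((μ i).factorial : ℝ))) * (cm ^ j / (j.factorial : ℝ))) := by
  have hn : l.choose j * Nat.multinomial univ μ * ((∏ i, (μ i).factorial) * j.factorial)
      = l.factorial := by
    have h1 := Nat.multinomial_spec univ μ
    rw [hμ] at h1
    calc l.choose j * Nat.multinomial univ μ * ((∏ i, (μ i).factorial) * j.factorial)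
        = l.choose j * j.factorial * ((∏ i, (μ i).factorial) * Nat.multinomial univ μ) := by ring
      _ = l.choose j * j.factorial * (l - j).factorial := by rw [h1]
      _ = l.factorial := Nat.choose_mul_factorial_mul_factorial hj
  have hne1 : (∏ i, ((μ i).factorial : ℝ)) ≠ 0 :=
    Finset.prod_ne_zero_iff.2 fun i _ => Nat.cast_ne_zero.2 (Nat.factorial_ne_zero _)
  have hne2 : (j.factorial : ℝ) ≠ 0 := Nat.cast_ne_zero.2 (Nat.factorial_ne_zero _)
  have hnR : (l.choose j : ℝ) * (Nat.multinomial univ μ : ℝ) *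
      ((∏ i, ((μ i).factorial : ℝ)) * (j.factorial : ℝ)) = (l.factorial : ℝ) := by
    exact_mod_cast congrArg (Nat.cast : ℕ → ℝ) hn
  field_simp
  linear_combination ((∏ i, c i ^ μ i) * cm ^ j) * hnR

private def Zf {R : Type*} [Monoid R] {m : ℕ} (z : Fin m → R) (y : Fin m → ZMod 2) : R :=
  (List.ofFn fun i => z i ^ (y i).val).prod

private theorem key_comm {R : Type*} [CommRing R] [Algebra ℝ R] (m l : ℕ)
    (z : Fin m → R) (hz : ∀ i, z i ^ 2 = 1) (c : Fin m → ℝ) (cm : ℝ) :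
    ((∑ i, c i • z i) + cm • (List.ofFn z).prod) ^ l =
      ∑ y : Fin m → ZMod 2,
        ((l.factorial : ℝ) *
            ((∑ j ∈ (Finset.range (l + 1)).filter (fun j => Even j),
                ∑ μ ∈ (Fintype.piFinset fun _ : Fin m => Finset.range (l + 1)).filter
                    (fun μ : Fin m → ℕ =>
                      (∑ i, μ i) = l - j ∧ ∀ i, ((μ i : ZMod 2) = y i)),
                  ((∏ i, c i ^ μ i) / (∏ i, ((μ i).factorial : ℝ))) *
                    (cm ^ j / (j.factorial : ℝ))) +
              ∑ j ∈ (Finset.range (l + 1)).filter (fun j => Odd j),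
                ∑ μ ∈ (Fintype.piFinset fun _ : Fin m => Finset.range (l + 1)).filter
                    (fun μ : Fin m → ℕ =>
                      (∑ i, μ i) = l - j ∧ ∀ i, ((μ i : ZMod 2) = y i + 1)),
                  ((∏ i, c i ^ μ i) / (∏ i, ((μ i).factorial : ℝ))) *
                    (cm ^ j / (j.factorial : ℝ)))) •
          (List.ofFn fun i : Fin m => z i ^ (y i).val).prod := by
  classical
  have hzpow : ∀ (i : Fin m) (n : ℕ), z i ^ n = z i ^ (n % 2) := by
    intro i n
    conv_lhs => rw [← Nat.div_add_mod n 2, pow_add, pow_mul, hz, one_pow, one_mul]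
  have hprodZ : ∀ (μ : Fin m → ℕ) (j : ℕ),
      (∏ i, z i ^ μ i) * (∏ i, z i) ^ j = Zf z (fun i => ((μ i + j : ℕ) : ZMod 2)) := by
    intro μ j
    rw [Zf, List.prod_ofFn, ← Finset.prod_pow, ← Finset.prod_mul_distrib]
    refine Finset.prod_congr rfl fun i _ => ?_
    rw [← pow_add, hzpow]
    congr 1
  calc ((∑ i, c i • z i) + cm • (List.ofFn z).prod) ^ l
      = ∑ j ∈ range (l+1), ∑ μ ∈ piAntidiag univ (l - j),
          (((l.choose j : ℝ) * (Nat.multinomial univ μ : ℝ) * (∏ i, c i ^ μ i) * cm ^ j)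
            • Zf z (fun i => ((μ i + j : ℕ) : ZMod 2))) := by
        rw [List.prod_ofFn, add_comm, add_pow]
        refine Finset.sum_congr rfl fun j hj => ?_
        rw [Finset.sum_pow_eq_sum_piAntidiag, Finset.mul_sum, Finset.sum_mul]
        refine Finset.sum_congr rfl fun μ hμ => ?_
        rw [← hprodZ]
        simp only [smul_pow, Algebra.smul_def, map_pow, mul_pow, Finset.prod_mul_distrib,
          ← map_pow, ← map_prod, map_mul, map_natCast]
        ring
    _ = ∑ j ∈ range (l+1), ∑ y : Fin m → ZMod 2,
          ∑ μ ∈ (piAntidiag univ (l - j)).filter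
              (fun μ : Fin m → ℕ => (fun i => ((μ i + j : ℕ) : ZMod 2)) = y),
            (((l.choose j : ℝ) * (Nat.multinomial univ μ : ℝ) * (∏ i, c i ^ μ i) * cm ^ j)
              • Zf z y) := by
        refine Finset.sum_congr rfl fun j _ => ?_
        rw [← Finset.sum_fiberwise (piAntidiag univ (l - j))
          (fun μ : Fin m → ℕ => (fun i => ((μ i + j : ℕ) : ZMod 2)))]
        refine Finset.sum_congr rfl fun y _ => Finset.sum_congr rfl fun μ hμ => ?_
        rw [(Finset.mem_filter.1 hμ).2]
    _ = ∑ y : Fin m → ZMod 2, ∑ j ∈ range (l+1),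
          ∑ μ ∈ (piAntidiag univ (l - j)).filter
              (fun μ : Fin m → ℕ => (fun i => ((μ i + j : ℕ) : ZMod 2)) = y),
            (((l.choose j : ℝ) * (Nat.multinomial univ μ : ℝ) * (∏ i, c i ^ μ i) * cm ^ j)
              • Zf z y) := Finset.sum_comm
    _ = _ := by
        refine Finset.sum_congr rfl fun y _ => ?_
        simp_rw [← Finset.sum_smul]
        show _ = _ • Zf z y
        congr 1
        rw [← Finset.sum_filter_add_sum_filter_not (range (l+1)) Even, mul_add]
        congr 1
        · rw [Finset.mul_sum]
          refine Finset.sum_congr rfl fun j hj => ?_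
          obtain ⟨hjr, hje⟩ := Finset.mem_filter.1 hj
          have hjl : j ≤ l := by
            have := Finset.mem_range.1 hjr; omega
          rw [Finset.mul_sum]
          refine Finset.sum_congr (sets_eq l j hjl y _ (fun μ => ?_)) fun μ hμ => ?_
          · rw [funext_iff]
            refine forall_congr' fun i => ?_
            rw [Nat.cast_add, even_cast2 hje, add_zero]
          · exact coeff_eq l j hjl μ (Finset.mem_filter.1 hμ).2.1 c cm
        · have hset : (range (l+1)).filter (fun j => ¬ Even j)
              = (range (l+1)).filter (fun j => Odd j) := by
            simp [Nat.not_even_iff_odd]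
          rw [hset, Finset.mul_sum]
          refine Finset.sum_congr rfl fun j hj => ?_
          obtain ⟨hjr, hjo⟩ := Finset.mem_filter.1 hj
          have hjl : j ≤ l := by
            have := Finset.mem_range.1 hjr; omega
          rw [Finset.mul_sum]
          refine Finset.sum_congr (sets_eq l j hjl y _ (fun μ => ?_)) fun μ hμ => ?_
          · rw [funext_iff]
            refine forall_congr' fun i => ?_
            rw [Nat.cast_add, odd_cast2 hjo]
            exact flip2 _ _
          · exact coeff_eq l j hjl μ (Finset.mem_filter.1 hμ).2.1 c cm

/-- symmetric l-th power expansion with the extra term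
`c_{m+1} z₁ z₂ ⋯ z_m`. -/

theorem stmt_6 (R : Type*) [Ring R] [Algebra ℝ R] (m l : ℕ)
    (z : Fin m → R)
    (hz : ∀ i, z i ^ 2 = 1)
    (hcomm : ∀ i j, z i * z j = z j * z i)
    (c : Fin m → ℝ) (cm : ℝ) :
    ((∑ i, c i • z i) + cm • (List.ofFn z).prod) ^ l =
      ∑ y : Fin m → ZMod 2,
        ((l.factorial : ℝ) *
            ((∑ j ∈ (Finset.range (l + 1)).filter (fun j => Even j),
                ∑ μ ∈ (Fintype.piFinset fun _ : Fin m => Finset.range (l + 1)).filter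
                    (fun μ : Fin m → ℕ =>
                      (∑ i, μ i) = l - j ∧ ∀ i, ((μ i : ZMod 2) = y i)),
                  ((∏ i, c i ^ μ i) / (∏ i, ((μ i).factorial : ℝ))) *
                    (cm ^ j / (j.factorial : ℝ))) +
              ∑ j ∈ (Finset.range (l + 1)).filter (fun j => Odd j),
                ∑ μ ∈ (Fintype.piFinset fun _ : Fin m => Finset.range (l + 1)).filter
                    (fun μ : Fin m → ℕ =>
                      (∑ i, μ i) = l - j ∧ ∀ i, ((μ i : ZMod 2) = y i + 1)),
                  ((∏ i, c i ^ μ i) / (∏ i, ((μ i).factorial : ℝ))) *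
                    (cm ^ j / (j.factorial : ℝ)))) •
          (List.ofFn fun i : Fin m => z i ^ (y i).val).prod := by
  classical
  have hcomm' : ∀ a ∈ Set.range z, ∀ b ∈ Set.range z, a * b = b * a := by
    rintro a ⟨i, rfl⟩ b ⟨k, rfl⟩; exact hcomm i k
  set S := Algebra.adjoin ℝ (Set.range z) with hS
  letI : CommRing S := Algebra.adjoinCommRingOfComm ℝ hcomm'
  letI : Algebra ℝ S := S.algebra
  let z' : Fin m → S := fun i => ⟨z i, Algebra.subset_adjoin ⟨i, rfl⟩⟩
  have hz' : ∀ i, z' i ^ 2 = 1 := by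
    intro i
    ext
    push_cast [z']
    exact hz i
  have E := key_comm (R := S) m l z' hz' c cm
  have E2 := congrArg (Subalgebra.val S) E
  have hv : ∀ i, (Subalgebra.val S) (z' i) = z i := fun i => rfl
  simp only [map_pow, map_add, map_sum, map_smul, map_list_prod, List.map_ofFn,
    Function.comp_def, hv] at E2
  exact E2
end

section
/- Fix l ∈ ℕ. For c ∈ ℝ, define (l+1)×(l+1) real matrices A₀(c), A₁(c), indexed by {0,…,l}, with entries (A_b(c))_{i,j} = c^{j−i}/(j−i)! if j ≥ i and j−i ≡ b (mod 2), and 0 otherwise, for b ∈ {0,1}. Let c₁,…,c_{m+1} ∈ ℝ, a₀,…,a_l ∈ ℝ, let e₀ ∈ ℝ^{l+1} be the first standard basis vector and v_R = (a₀·0!, …, a_l·l!)ᵀ. Then for every y ∈ 𝔽₂^m, Σ_{s=0}^{l} a_s · s! · ( I₁^s(y) + I₂^s(y) ) = e₀ᵀ A_{y₁}(c₁) ⋯ A_{y_m}(c_m) A₀(c_{m+1}) v_R + e₀ᵀ A_{1−y₁}(c₁) ⋯ A_{1−y_m}(c_m) A₁(c_{m+1}) v_R, where I₁^s(y) = Σ_{0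 ≤ j ≤ s, j even} Σ_{μ ∈ ℤ_{≥0}^m, |μ| = s−j, μ ≡ y (mod 2)} (c^μ/μ!) · (c_{m+1}^j/j!) and I₂^s(y) = Σ_{0 ≤ j ≤ s, j odd} Σ_{μ ∈ ℤ_{≥0}^m, |μ| = s−j, μ ≡ y + 𝟙 (mod 2)} (c^μ/μ!) · (c_{m+1}^j/j!), with 𝟙 the all-ones vector in 𝔽₂^m. -/
lemma zmod2_zero_iff (j : ℕ) : ((j : ZMod 2) = 0) ↔ Even j := by
  rw [Nat.even_iff, ← ZMod.natCast_mod j 2]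
  have : j % 2 = 0 ∨ j % 2 = 1 := by omega
  rcases this with h | h <;> simp [h]

lemma zmod2_one_iff (j : ℕ) : ((j : ZMod 2) = 1) ↔ Odd j := by
  rw [Nat.odd_iff, ← ZMod.natCast_mod j 2]
  have : j % 2 = 0 ∨ j % 2 = 1 := by omega
  rcases this with h | h <;> simp [h]

lemma sum_piFinset_cons {M : Type*} [AddCommMonoid M] (n N : ℕ)
    (H : (Fin (n + 1) → ℕ) → M) :
    ∑ μ ∈ Fintype.piFinset (fun _ : Fin (n + 1) => Finset.range N), H μ
      = ∑ d ∈ Finset.range N,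
          ∑ ν ∈ Fintype.piFinset (fun _ : Fin n => Finset.range N), H (Fin.cons d ν) := by
  rw [← Finset.sum_product']
  refine Finset.sum_nbij' (fun μ => (μ 0, Fin.tail μ)) (fun p => Fin.cons p.1 p.2)
    ?_ ?_ ?_ ?_ ?_
  · intro μ hμ
    simp only [Fintype.mem_piFinset] at hμ
    simp [Finset.mem_product, Fintype.mem_piFinset, Fin.tail, hμ]
  · intro p hp
    simp only [Finset.mem_product, Fintype.mem_piFinset] at hp
    simp only [Fintype.mem_piFinset]
    intro i
    refine Fin.cases ?_ ?_ i
    · simpa using hp.1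
    · intro i; simpa using hp.2 i
  · intro μ _; exact Fin.cons_self_tail μ
  · intro p _; simp
  · intro μ _; rw [Fin.cons_self_tail]

lemma sum_piFinset_snoc {M : Type*} [AddCommMonoid M] (n N : ℕ)
    (H : (Fin (n + 1) → ℕ) → M) :
    ∑ μ ∈ Fintype.piFinset (fun _ : Fin (n + 1) => Finset.range N), H μ
      = ∑ ν ∈ Fintype.piFinset (fun _ : Fin n => Finset.range N),
          ∑ d ∈ Finset.range N, H (Fin.snoc ν d) := by
  rw [← Finset.sum_product']
  refine Finset.sum_nbij' (fun μ => (Fin.init μ, μ (Fin.last n))) (fun p => Fin.snoc p.1 p.2)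
    ?_ ?_ ?_ ?_ ?_
  · intro μ hμ
    simp only [Fintype.mem_piFinset] at hμ
    simp [Finset.mem_product, Fintype.mem_piFinset, Fin.init, hμ]
  · intro p hp
    simp only [Finset.mem_product, Fintype.mem_piFinset] at hp
    simp only [Fintype.mem_piFinset]
    intro i
    refine Fin.lastCases ?_ ?_ i
    · simpa using hp.2
    · intro i; simpa using hp.1 i
  · intro μ _; exact Fin.snoc_init_self μ
  · intro p _; simp
  · intro μ _; rw [Fin.snoc_init_self]



lemma entry_lemma (l : ℕ) : ∀ (n : ℕ) (b : Fin n → ZMod 2) (c : Fin n → ℝ)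
    (p q : Fin (l + 1)),
    ((List.ofFn fun i => Amat l (b i) (c i)).prod) p q
      = ∑ μ ∈ Fintype.piFinset (fun _ : Fin n => Finset.range (l + 1)),
          if ((p : ℕ) + ∑ i, μ i = (q : ℕ) ∧ ∀ i, ((μ i : ZMod 2) = b i)) then
            ∏ i, c i ^ μ i / ((μ i).factorial : ℝ)
          else 0 := by
  intro n
  induction n with
  | zero =>
    intro b c p q
    simp only [List.ofFn_zero, List.prod_nil, Matrix.one_apply]
    have h : (Fintype.piFinset fun _ : Fin 0 => Finset.range (l + 1)) = {fun _ => 0} := by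
      ext μ
      simp only [Fintype.mem_piFinset, Finset.mem_singleton]
      constructor
      · intro _; exact funext fun i => i.elim0
      · intro _ i; exact i.elim0
    rw [h, Finset.sum_singleton]
    simp [Fin.ext_iff]
  | succ n ih =>
    intro b c p q
    rw [List.ofFn_succ, List.prod_cons, Matrix.mul_apply]
    simp_rw [ih (fun i => b i.succ) (fun i => c i.succ)]
    rw [sum_piFinset_cons]
    set S : ℕ → ℝ := fun r =>
      ∑ ν ∈ Fintype.piFinset (fun _ : Fin n => Finset.range (l + 1)),
        if (r + ∑ i, ν i = (q : ℕ) ∧ ∀ i, ((ν i : ZMod 2) = b i.succ)) then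
          ∏ i, c i.succ ^ ν i / ((ν i).factorial : ℝ)
        else 0 with hS
    set g : ℕ → ℝ := fun r =>
      (if (p : ℕ) ≤ r ∧ (((r - (p : ℕ) : ℕ)) : ZMod 2) = b 0 then
        c 0 ^ (r - (p : ℕ)) / (((r - (p : ℕ)).factorial : ℝ)) else 0) * S r with hg
    have hSzero : ∀ r, (l : ℕ) < r → S r = 0 := by
      intro r hr
      apply Finset.sum_eq_zero
      intro ν _
      rw [if_neg]
      rintro ⟨h1, -⟩
      have := q.isLt
      omega
    have hL : ∑ r : Fin (l + 1), (Amat l (b 0) (c 0)) p r *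
        (∑ ν ∈ Fintype.piFinset (fun _ : Fin n => Finset.range (l + 1)),
          if ((r : ℕ) + ∑ i, ν i = (q : ℕ) ∧ ∀ i, ((ν i : ZMod 2) = b i.succ)) then
            ∏ i, c i.succ ^ ν i / ((ν i).factorial : ℝ)
          else 0) = ∑ r ∈ Finset.range (l + 1), g r := by
      rw [← Fin.sum_univ_eq_sum_range]
      exact Finset.sum_congr rfl fun r _ => rfl
    rw [hL]
    have h2 : ∑ r ∈ Finset.range (l + 1), g r
        = ∑ r ∈ Finset.range ((p : ℕ) + (l + 1)), g r := by
      apply Finset.sum_subset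
      · exact Finset.range_subset_range.2 (by omega)
      · intro r _ hr
        simp only [Finset.mem_range, not_lt] at hr
        rw [hg]
        simp only
        rw [hSzero r (by omega), mul_zero]
    rw [h2, Finset.sum_range_add]
    have h3 : ∑ r ∈ Finset.range (p : ℕ), g r = 0 := by
      apply Finset.sum_eq_zero
      intro r hr
      simp only [Finset.mem_range] at hr
      rw [hg]
      simp only
      rw [if_neg (by omega), zero_mul]
    rw [h3, zero_add]
    apply Finset.sum_congr rfl
    intro d _
    rw [hg]
    simp only
    have hd : (p : ℕ) + d - (p : ℕ) = d := by omega
    rw [hd, hS]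
    simp only [Nat.le_add_right, true_and, Finset.mul_sum]
    apply Finset.sum_congr rfl
    intro ν _
    simp only [Fin.sum_cons, Fin.forall_fin_succ, Fin.cons_zero, Fin.cons_succ,
      Fin.prod_univ_succ, ← add_assoc]
    by_cases h1 : (d : ZMod 2) = b 0
    · by_cases h2 : ((p : ℕ) + d + ∑ i, ν i = (q : ℕ) ∧ ∀ i, ((ν i : ZMod 2) = b i.succ))
      · rw [if_pos h1, if_pos h2, if_pos ⟨h2.1, h1, h2.2⟩]
      · rw [if_pos h1, if_neg h2, if_neg (fun hC => h2 ⟨hC.1, hC.2.2⟩), mul_zero]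
    · rw [if_neg h1, zero_mul, if_neg (fun hC => h1 hC.2.1)]


lemma key_lemma (l m s : ℕ) (hs : s ≤ l) (c : Fin m → ℝ) (cm : ℝ)
    (yb : Fin m → ZMod 2) (pb : ZMod 2) :
    ∑ j ∈ (Finset.range (s + 1)).filter (fun j : ℕ => ((j : ZMod 2) = pb)),
        ∑ μ ∈ (Fintype.piFinset fun _ : Fin m => Finset.range (s + 1)).filter
            (fun μ : Fin m → ℕ =>
              (∑ i, μ i) = s - j ∧ ∀ i, ((μ i : ZMod 2) = yb i)),
          ((∏ i, c i ^ μ i) / (∏ i, ((μ i).factorial : ℝ))) * (cm ^ j / (j.factorial : ℝ))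
      = ∑ μ' ∈ Fintype.piFinset (fun _ : Fin (m + 1) => Finset.range (l + 1)),
          if ((∑ i, μ' i) = s ∧ ∀ i, (((μ' : Fin (m+1) → ℕ) i : ZMod 2) = (Fin.snoc yb pb : Fin (m+1) → ZMod 2) i)) then
            ∏ i, (Fin.snoc c cm : Fin (m + 1) → ℝ) i ^ μ' i / ((μ' i).factorial : ℝ)
          else 0 := by
  rw [sum_piFinset_snoc]
  -- reshape RHS summand
  have hR : ∀ ν ∈ Fintype.piFinset (fun _ : Fin m => Finset.range (l + 1)),
      ∀ d ∈ Finset.range (l + 1),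
      (if ((∑ i, (Fin.snoc ν d : Fin (m+1) → ℕ) i) = s ∧
          ∀ i, (((Fin.snoc ν d : Fin (m+1) → ℕ) i : ZMod 2) = (Fin.snoc yb pb : Fin (m+1) → ZMod 2) i)) then
        ∏ i, (Fin.snoc c cm : Fin (m + 1) → ℝ) i ^ (Fin.snoc ν d : Fin (m+1) → ℕ) i /
          (((Fin.snoc ν d : Fin (m+1) → ℕ) i).factorial : ℝ)
      else 0)
      = if ((∑ i, ν i) + d = s ∧ ((d : ZMod 2) = pb) ∧ ∀ i, ((ν i : ZMod 2) = yb i)) then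
          ((∏ i, c i ^ ν i) / (∏ i, ((ν i).factorial : ℝ))) * (cm ^ d / (d.factorial : ℝ))
        else 0 := by
    intro ν _ d _
    rw [Fin.sum_snoc]
    simp only [Fin.forall_fin_succ', Fin.snoc_castSucc, Fin.snoc_last,
      Fin.prod_univ_castSucc]
    rw [Finset.prod_div_distrib]
    apply if_congr _ rfl rfl
    tauto
  rw [Finset.sum_congr rfl (fun ν hν => Finset.sum_congr rfl (fun d hd => hR ν hν d hd))]
  rw [Finset.sum_comm]
  rw [Finset.sum_filter]
  -- step 1: rewrite inner filtered sums and extend μ-range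
  have step1 : ∀ j ∈ Finset.range (s + 1),
      (∑ μ ∈ (Fintype.piFinset fun _ : Fin m => Finset.range (s + 1)).filter
          (fun μ : Fin m → ℕ =>
            (∑ i, μ i) = s - j ∧ ∀ i, ((μ i : ZMod 2) = yb i)),
        ((∏ i, c i ^ μ i) / (∏ i, ((μ i).factorial : ℝ))) * (cm ^ j / (j.factorial : ℝ)))
      = ∑ μ ∈ Fintype.piFinset (fun _ : Fin m => Finset.range (l + 1)),
          if ((∑ i, μ i) + j = s ∧ ∀ i, ((μ i : ZMod 2) = yb i)) then
            ((∏ i, c i ^ μ i) / (∏ i, ((μ i).factorial : ℝ))) * (cm ^ j / (j.factorial : ℝ))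
          else 0 := by
    intro j hj
    simp only [Finset.mem_range] at hj
    rw [Finset.sum_filter]
    rw [Finset.sum_congr rfl (fun μ (hμ : μ ∈ Fintype.piFinset fun _ : Fin m => Finset.range (s+1)) =>
      if_congr (⟨fun ⟨h1, h2⟩ => ⟨by omega, h2⟩, fun ⟨h1, h2⟩ => ⟨by omega, h2⟩⟩ :
        ((∑ i, μ i = s - j ∧ ∀ i, ((μ i : ZMod 2) = yb i)) ↔
          ((∑ i, μ i) + j = s ∧ ∀ i, ((μ i : ZMod 2) = yb i)))) rfl rfl)]
    apply Finset.sum_subset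
    · exact Fintype.piFinset_subset _ _ (fun i => Finset.range_subset_range.2 (by omega))
    · intro μ hμ hμ'
      simp only [Fintype.mem_piFinset, Finset.mem_range] at hμ hμ'
      push_neg at hμ'
      obtain ⟨i0, hi0⟩ := hμ'
      rw [if_neg]
      rintro ⟨h1, -⟩
      have hle : μ i0 ≤ ∑ i, μ i := Finset.single_le_sum (fun i _ => Nat.zero_le _)
        (Finset.mem_univ i0)
      omega
  rw [Finset.sum_congr rfl (fun j hj => by rw [step1 j hj])]
  -- step 2: extend j-range
  have step2 := Finset.sum_subset (f := fun j : ℕ =>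
      if ((j : ZMod 2) = pb) then
        ∑ μ ∈ Fintype.piFinset (fun _ : Fin m => Finset.range (l + 1)),
          if ((∑ i, μ i) + j = s ∧ ∀ i, ((μ i : ZMod 2) = yb i)) then
            ((∏ i, c i ^ μ i) / (∏ i, ((μ i).factorial : ℝ))) * (cm ^ j / (j.factorial : ℝ))
          else 0
      else 0)
    (Finset.range_subset_range.2 (show s + 1 ≤ l + 1 by omega))
    (by
      intro j hj hj'
      simp only [Finset.mem_range] at hj hj'
      simp only [ite_eq_right_iff]
      intro _
      apply Finset.sum_eq_zero
      intro μ _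
      rw [if_neg]
      rintro ⟨h1, -⟩
      omega)
  rw [step2]
  beta_reduce
  -- step 3: termwise
  apply Finset.sum_congr rfl
  intro j _
  by_cases hp : (j : ZMod 2) = pb
  · rw [if_pos hp]
    apply Finset.sum_congr rfl
    intro μ _
    apply if_congr _ rfl rfl
    tauto
  · rw [if_neg hp]
    symm
    apply Finset.sum_eq_zero
    intro μ _
    rw [if_neg]
    rintro ⟨-, h2, -⟩
    exact hp h2


/-- amplitude identity for the reference state in the nearly
independent case k = 1, as a sum over the two diagonal blocks. -/
theorem stmt_7 (l m : ℕ) (c : Fin m → ℝ) (cm : ℝ) (a : ℕ → ℝ) (y : Fin m → ZMod 2) :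
    ∑ s ∈ Finset.range (l + 1),
        a s * (s.factorial : ℝ) *
          ((∑ j ∈ (Finset.range (s + 1)).filter (fun j => Even j),
              ∑ μ ∈ (Fintype.piFinset fun _ : Fin m => Finset.range (s + 1)).filter
                  (fun μ : Fin m → ℕ =>
                    (∑ i, μ i) = s - j ∧ ∀ i, ((μ i : ZMod 2) = y i)),
                ((∏ i, c i ^ μ i) / (∏ i, ((μ i).factorial : ℝ))) *
                  (cm ^ j / (j.factorial : ℝ))) +
            ∑ j ∈ (Finset.range (s + 1)).filter (fun j => Odd j),
              ∑ μ ∈ (Fintype.piFinset fun _ : Fin m => Finset.range (s + 1)).filter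
                  (fun μ : Fin m → ℕ =>
                    (∑ i, μ i) = s - j ∧ ∀ i, ((μ i : ZMod 2) = y i + 1)),
                ((∏ i, c i ^ μ i) / (∏ i, ((μ i).factorial : ℝ))) *
                  (cm ^ j / (j.factorial : ℝ))) =
      (((List.ofFn fun i : Fin m => Amat l (y i) (c i)).prod * Amat l 0 cm).mulVec
          (fun j : Fin (l + 1) => a j * ((j : ℕ).factorial : ℝ))) 0 +
        (((List.ofFn fun i : Fin m => Amat l (y i + 1) (c i)).prod * Amat l 1 cm).mulVec
          (fun j : Fin (l + 1) => a j * ((j : ℕ).factorial : ℝ))) 0 := by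
    -- abbreviations
  have hconcat : ∀ (yb : Fin m → ZMod 2) (pb : ZMod 2),
      (List.ofFn fun i : Fin m => Amat l (yb i) (c i)).prod * Amat l pb cm
        = (List.ofFn fun i : Fin (m + 1) =>
            Amat l ((Fin.snoc yb pb : Fin (m+1) → ZMod 2) i)
              ((Fin.snoc c cm : Fin (m+1) → ℝ) i)).prod := by
    intro yb pb
    rw [List.ofFn_succ', List.prod_concat]
    simp
  have hmv : ∀ (yb : Fin m → ZMod 2) (pb : ZMod 2),
      (((List.ofFn fun i : Fin m => Amat l (yb i) (c i)).prod * Amat l pb cm).mulVec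
          (fun j : Fin (l + 1) => a j * ((j : ℕ).factorial : ℝ))) 0
        = ∑ s ∈ Finset.range (l + 1),
            (∑ μ' ∈ Fintype.piFinset (fun _ : Fin (m + 1) => Finset.range (l + 1)),
              if ((∑ i, μ' i) = s ∧
                  ∀ i, (((μ' : Fin (m+1) → ℕ) i : ZMod 2)
                    = (Fin.snoc yb pb : Fin (m+1) → ZMod 2) i)) then
                ∏ i, (Fin.snoc c cm : Fin (m + 1) → ℝ) i ^ μ' i / ((μ' i).factorial : ℝ)
              else 0) * (a s * (s.factorial : ℝ)) := by
    intro yb pb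
    rw [hconcat yb pb]
    show ∑ t : Fin (l + 1), _ * (a t * ((t : ℕ).factorial : ℝ)) = _
    rw [← Fin.sum_univ_eq_sum_range (fun s =>
      (∑ μ' ∈ Fintype.piFinset (fun _ : Fin (m + 1) => Finset.range (l + 1)),
        if ((∑ i, μ' i) = s ∧
            ∀ i, (((μ' : Fin (m+1) → ℕ) i : ZMod 2)
              = (Fin.snoc yb pb : Fin (m+1) → ZMod 2) i)) then
          ∏ i, (Fin.snoc c cm : Fin (m + 1) → ℝ) i ^ μ' i / ((μ' i).factorial : ℝ)
        else 0) * (a s * (s.factorial : ℝ))) (l + 1)]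
    apply Finset.sum_congr rfl
    intro t _
    congr 1
    rw [entry_lemma l (m + 1) _ _ 0 t]
    apply Finset.sum_congr rfl
    intro μ' _
    apply if_congr _ rfl rfl
    constructor
    · rintro ⟨h1, h2⟩; exact ⟨by simpa using h1, h2⟩
    · rintro ⟨h1, h2⟩; exact ⟨by simpa using h1, h2⟩
  rw [hmv y 0, hmv (fun i => y i + 1) 1, ← Finset.sum_add_distrib]
  apply Finset.sum_congr rfl
  intro s hs
  simp only [Finset.mem_range] at hs
  have hsl : s ≤ l := by omega
  have he : (Finset.range (s + 1)).filter (fun j => Even j)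
      = (Finset.range (s + 1)).filter (fun j : ℕ => ((j : ZMod 2) = 0)) :=
    Finset.filter_congr (fun x _ => by
      exact (zmod2_zero_iff x).symm)
  have ho : (Finset.range (s + 1)).filter (fun j => Odd j)
      = (Finset.range (s + 1)).filter (fun j : ℕ => ((j : ZMod 2) = 1)) :=
    Finset.filter_congr (fun x _ => by
      exact (zmod2_one_iff x).symm)
  rw [he, ho, key_lemma l m s hsl c cm y 0, key_lemma l m s hsl c cm (fun i => y i + 1) 1]
  ring
end

section
/- Let R be an associative unital ring that is an algebra over ℝ, and let z₁,…,z_{m−k} ∈ R be pairwise commuting elements satisfying z_i² = 1 for all i. Let U₁,…,U_k ⊆ {1,…,m−k} be subsets, let c₁,…,c_m ∈ ℝ, and set x = Σ_{i=1}^{m−k} c_i z_i + Σ_{j=1}^{k} c_{m−k+j} Π_{i ∈ U_j} z_i. Then for every l ∈ ℕ, x^l = Σ_{y ∈ 𝔽₂^{m−k}} l! · ( Σ_{K ⊆ {1,…,k}} I_K^l(y) ) · z₁^{y₁} ⋯ z_{m−k}^{y_{m−k}}, where for K ⊆ {1,…,k}: χ_K ∈ 𝔽₂^{m−k} is the mod-2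 sum Σ_{j ∈ K} 𝟙_{U_j} of the indicator vectors of the sets U_j, and I_K^l(y) = Σ_{s ∈ ℤ_{≥0}^k, |s| ≤ l, s_j odd for j ∈ K and s_j even for j ∉ K} Σ_{μ ∈ ℤ_{≥0}^{m−k}, |μ| = l − |s|, μ ≡ y + χ_K (mod 2)} ( Π_{i=1}^{m−k} c_i^{μ_i}/μ_i! ) · ( Π_{j=1}^{k} c_{m−k+j}^{s_j}/s_j! ). -/
open Finset

lemma ofFn_prod_mul {R : Type*} [Monoid R] :
    ∀ {n : ℕ} (f g : Fin n → R), (∀ i j, Commute (g i) (f j)) →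
      (List.ofFn fun i => f i * g i).prod = (List.ofFn f).prod * (List.ofFn g).prod := by
  intro n
  induction n with
  | zero => intro f g _; simp
  | succ n ih =>
    intro f g h
    rw [List.ofFn_succ, List.ofFn_succ, List.ofFn_succ, List.prod_cons, List.prod_cons,
      List.prod_cons, ih (fun i => f i.succ) (fun i => g i.succ) (fun i j => h _ _)]
    have hc : Commute (g 0) (List.ofFn fun i : Fin n => f i.succ).prod := by
      apply Commute.list_prod_right
      intro x hx
      obtain ⟨i, rfl⟩ := List.mem_ofFn.1 hx
      exact h 0 i.succ
    calc f 0 * g 0 * ((List.ofFn fun i : Fin n => f i.succ).prod *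
          (List.ofFn fun i : Fin n => g i.succ).prod)
        = f 0 * (g 0 * (List.ofFn fun i : Fin n => f i.succ).prod) *
          (List.ofFn fun i : Fin n => g i.succ).prod := by simp only [mul_assoc]
      _ = f 0 * ((List.ofFn fun i : Fin n => f i.succ).prod * g 0) *
          (List.ofFn fun i : Fin n => g i.succ).prod := by rw [hc.eq]
      _ = f 0 * (List.ofFn fun i : Fin n => f i.succ).prod *
          (g 0 * (List.ofFn fun i : Fin n => g i.succ).prod) := by
          rw [mul_assoc, mul_assoc, mul_assoc]

lemma ofFn_prod_single {R : Type*} [Monoid R] :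
    ∀ {n : ℕ} (f : Fin n → R) (i : Fin n), (∀ j, j ≠ i → f j = 1) →
      (List.ofFn f).prod = f i := by
  intro n
  induction n with
  | zero => exact fun f i => i.elim0
  | succ n ih =>
    intro f i h
    rw [List.ofFn_succ, List.prod_cons]
    rcases Fin.eq_zero_or_eq_succ i with rfl | ⟨i', rfl⟩
    · have : (List.ofFn fun j : Fin n => f j.succ).prod = 1 := by
        apply List.prod_eq_one
        intro x hx
        obtain ⟨j, rfl⟩ := List.mem_ofFn.1 hx
        exact h j.succ (Fin.succ_ne_zero j)
      rw [this, mul_one]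
    · rw [h 0 (Fin.succ_ne_zero i').symm, one_mul]
      exact ih (fun j => f j.succ) i' fun j hj => h j.succ (by simpa using hj)

noncomputable def eA (M : ℕ) (v : Fin M → ZMod 2) :
    MonoidAlgebra ℝ (Multiplicative (Fin M → ZMod 2)) :=
  MonoidAlgebra.of ℝ _ (Multiplicative.ofAdd v)

lemma eA_zero (M : ℕ) : eA M 0 = 1 := by
  rw [eA, show Multiplicative.ofAdd (0 : Fin M → ZMod 2) = 1 from rfl, map_one]
lemma eA_add (M : ℕ) (v w : Fin M → ZMod 2) : eA M (v + w) = eA M v * eA M w := by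
  rw [eA, eA, eA, show Multiplicative.ofAdd (v + w)
    = Multiplicative.ofAdd v * Multiplicative.ofAdd w from rfl, map_mul]
lemma eA_pow (M : ℕ) (v : Fin M → ZMod 2) (n : ℕ) : eA M v ^ n = eA M (n • v) := by
  rw [eA, eA, ← map_pow, ofAdd_nsmul]
lemma prod_smul_eA {ι : Type*} (M : ℕ) (s : Finset ι) (a : ι → ℝ)
    (v : ι → (Fin M → ZMod 2)) :
    ∏ t ∈ s, a t • eA M (v t) = (∏ t ∈ s, a t) • eA M (∑ t ∈ s, v t) := by
  induction s using Finset.cons_induction with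
  | empty => simp [eA_zero]
  | cons x s hx ih => rw [prod_cons, prod_cons, sum_cons, ih, smul_mul_smul_comm, eA_add]
lemma natmul_eA (M : ℕ) (n : ℕ) (x : MonoidAlgebra ℝ (Multiplicative (Fin M → ZMod 2))) :
    (n : MonoidAlgebra ℝ (Multiplicative (Fin M → ZMod 2))) * x = (n : ℝ) • x := by
  rw [Algebra.smul_def, map_natCast]
lemma natCast_zmod2 (n : ℕ) : (n : ZMod 2) = if Odd n then 1 else 0 := by
  have h2 : (n : ZMod 2) = ((n % 2 : ℕ) : ZMod 2) := (ZMod.natCast_mod n 2).symm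
  rw [h2]; simp only [Nat.odd_iff]
  rcases Nat.mod_two_eq_zero_or_one n with h | h <;> rw [h] <;> simp

lemma zmod2_cases (a : ZMod 2) : a = 0 ∨ a = 1 := by revert a; decide

lemma pow_val_add {R : Type*} [Monoid R] (x : R) (hx : x ^ 2 = 1) (a b : ZMod 2) :
    x ^ (a + b).val = x ^ a.val * x ^ b.val := by
  rcases zmod2_cases a with rfl | rfl <;> rcases zmod2_cases b with rfl | rfl <;>
    simp [show ((0 : ZMod 2)).val = 0 from rfl, show ((1 : ZMod 2)).val = 1 from rfl,
      show ((1 + 1 : ZMod 2)).val = 0 from rfl, ← sq, hx]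

lemma zmod2_rearrange (a b c : ZMod 2) : a = b + c ↔ b = a + c := by
  revert a b c; decide

lemma main_alg (M k l : ℕ) (U : Fin k → Finset (Fin M)) (c : Fin M → ℝ) (d : Fin k → ℝ) :
    ((∑ i, c i • eA M (Pi.single i 1)) +
        ∑ j, d j • eA M (fun i => if i ∈ U j then 1 else 0)) ^ l =
      ∑ y : Fin M → ZMod 2,
        ((l.factorial : ℝ) *
            ∑ K : Finset (Fin k),
              ∑ s ∈ (Fintype.piFinset fun _ : Fin k => Finset.range (l + 1)).filter
                  (fun s : Fin k → ℕ =>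
                    (∑ j, s j) ≤ l ∧
                    (∀ j ∈ K, Odd (s j)) ∧ ∀ j ∉ K, Even (s j)),
                ∑ μ ∈ (Fintype.piFinset fun _ : Fin M => Finset.range (l + 1)).filter
                    (fun μ : Fin M → ℕ =>
                      (∑ i, μ i) = l - (∑ j, s j) ∧
                      ∀ i, (μ i : ZMod 2) =
                        y i + ∑ j ∈ K, (if i ∈ U j then (1 : ZMod 2) else 0)),
                  (∏ i, c i ^ μ i / ((μ i).factorial : ℝ)) *
                    ∏ j, d j ^ s j / ((s j).factorial : ℝ)) • eA M y := by
  classical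
  set δ : Fin M → (Fin M → ZMod 2) := fun i => Pi.single i 1 with hδ
  set χ : Fin k → (Fin M → ZMod 2) := fun j i => if i ∈ U j then 1 else 0 with hχ
  set F : (Fin M ⊕ Fin k) → MonoidAlgebra ℝ (Multiplicative (Fin M → ZMod 2)) :=
    Sum.elim (fun i => c i • eA M (δ i)) (fun j => d j • eA M (χ j)) with hF
  set wv : ((Fin M ⊕ Fin k) → ℕ) → (Fin M → ZMod 2) :=
    fun g => (∑ i, g (Sum.inl i) • δ i) + ∑ j, g (Sum.inr j) • χ j with hwv
  have hX : ((∑ i, c i • eA M (δ i)) + ∑ j, d j • eA M (χ j))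
      = ∑ t : Fin M ⊕ Fin k, F t := by
    rw [Fintype.sum_sum_type]; rfl
  have stepA : ∀ g : (Fin M ⊕ Fin k) → ℕ,
      (Nat.multinomial univ g : MonoidAlgebra ℝ (Multiplicative (Fin M → ZMod 2))) *
          ∏ t, F t ^ g t
        = ((Nat.multinomial univ g : ℝ) *
            ((∏ i, c i ^ g (Sum.inl i)) * ∏ j, d j ^ g (Sum.inr j))) • eA M (wv g) := by
    intro g
    have h1 : ∏ t, F t ^ g t
        = ((∏ i, c i ^ g (Sum.inl i)) * ∏ j, d j ^ g (Sum.inr j)) • eA M (wv g) := by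
      rw [Fintype.prod_sum_type]
      show (∏ i, (c i • eA M (δ i)) ^ g (Sum.inl i)) *
          (∏ j, (d j • eA M (χ j)) ^ g (Sum.inr j)) = _
      simp_rw [smul_pow, eA_pow]
      rw [prod_smul_eA, prod_smul_eA, smul_mul_smul_comm, ← eA_add]
    rw [h1, natmul_eA, smul_smul]
  rw [hX, Finset.sum_pow_eq_sum_piAntidiag]
  rw [Finset.sum_congr rfl fun g _ => stepA g]
  symm
  set Kof : (Fin k → ℕ) → Finset (Fin k) := fun s => univ.filter (fun j => Odd (s j)) with hKof
  set yof : (Fin M → ℕ) → Finset (Fin k) → (Fin M → ZMod 2) :=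
    fun μ K => fun i => (μ i : ZMod 2) + ∑ j ∈ K, (if i ∈ U j then 1 else 0) with hyof
  set P : (Fin M → ℕ) → (Fin k → ℕ) → ℝ :=
    fun μ s => (∏ i, c i ^ μ i / ((μ i).factorial : ℝ)) *
      ∏ j, d j ^ s j / ((s j).factorial : ℝ) with hP
  -- distribute the scalar over the triple sum
  simp_rw [Finset.mul_sum, Finset.sum_smul]
  -- swap the y-sum inside
  rw [Finset.sum_comm]
  -- collapse the y-sum with the μ-sum
  have hyμ : ∀ (K : Finset (Fin k)) (co : (Fin M → ℕ) → ℝ) (n : ℕ),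
      (∑ y : Fin M → ZMod 2, ∑ μ ∈ (Fintype.piFinset fun _ : Fin M =>
          Finset.range (l + 1)).filter
          (fun μ : Fin M → ℕ => (∑ i, μ i) = n ∧
            ∀ i, (μ i : ZMod 2) = y i + ∑ j ∈ K, (if i ∈ U j then (1 : ZMod 2) else 0)),
        co μ • eA M y)
      = ∑ μ ∈ (Fintype.piFinset fun _ : Fin M => Finset.range (l + 1)).filter
          (fun μ : Fin M → ℕ => (∑ i, μ i) = n), co μ • eA M (yof μ K) := by
    intro K co n
    have hQ : ∀ (y : Fin M → ZMod 2) (μ : Fin M → ℕ),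
        (∀ i, (μ i : ZMod 2) = y i + ∑ j ∈ K, (if i ∈ U j then (1 : ZMod 2) else 0))
          ↔ y = yof μ K := by
      intro y μ
      rw [funext_iff]
      exact forall_congr' fun i => zmod2_rearrange _ _ _
    calc (∑ y : Fin M → ZMod 2, ∑ μ ∈ (Fintype.piFinset fun _ : Fin M =>
            Finset.range (l + 1)).filter
            (fun μ : Fin M → ℕ => (∑ i, μ i) = n ∧
              ∀ i, (μ i : ZMod 2) = y i + ∑ j ∈ K, (if i ∈ U j then (1 : ZMod 2) else 0)),
          co μ • eA M y)
        = ∑ y : Fin M → ZMod 2, ∑ μ ∈ (Fintype.piFinset fun _ : Fin M =>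
            Finset.range (l + 1)),
            if (∑ i, μ i) = n ∧ y = yof μ K then co μ • eA M y else 0 := by
          refine Finset.sum_congr rfl fun y _ => ?_
          rw [Finset.sum_filter]
          exact Finset.sum_congr rfl fun μ _ =>
            if_congr (and_congr_right fun _ => hQ y μ) rfl rfl
      _ = ∑ μ ∈ (Fintype.piFinset fun _ : Fin M => Finset.range (l + 1)),
            ∑ y : Fin M → ZMod 2,
            if (∑ i, μ i) = n ∧ y = yof μ K then co μ • eA M y else 0 := Finset.sum_comm
      _ = ∑ μ ∈ (Fintype.piFinset fun _ : Fin M => Finset.range (l + 1)),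
            if (∑ i, μ i) = n then co μ • eA M (yof μ K) else 0 := by
          refine Finset.sum_congr rfl fun μ _ => ?_
          by_cases hA : (∑ i, μ i) = n
          · simp only [hA, true_and, if_true]
            rw [show (∑ y : Fin M → ZMod 2, if y = yof μ K then co μ • eA M y else 0)
              = if yof μ K ∈ (univ : Finset (Fin M → ZMod 2)) then co μ • eA M (yof μ K)
                else 0 from Finset.sum_ite_eq' univ (yof μ K) (fun y => co μ • eA M y)]
            simp
          · simp [hA]
      _ = _ := (Finset.sum_filter _ _).symm
  rw [Finset.sum_congr rfl fun K _ => Finset.sum_comm]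
  rw [Finset.sum_congr rfl fun K (_ : K ∈ univ) => Finset.sum_congr rfl fun s _ =>
    hyμ K (fun μ => (l.factorial : ℝ) * P μ s) (l - ∑ j, s j)]
  -- collapse the K-sum
  have hPar : ∀ (K : Finset (Fin k)) (s : Fin k → ℕ),
      ((∀ j ∈ K, Odd (s j)) ∧ ∀ j ∉ K, Even (s j)) ↔ K = Kof s := by
    intro K s
    constructor
    · rintro ⟨h1, h2⟩
      ext j
      rw [hKof]
      simp only [Finset.mem_filter, Finset.mem_univ, true_and]
      constructor
      · exact h1 j
      · intro hodd
        by_contra hj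
        exact (Nat.not_odd_iff_even.2 (h2 j hj)) hodd
    · rintro rfl
      constructor
      · intro j hj
        rw [hKof] at hj
        exact (Finset.mem_filter.1 hj).2
      · intro j hj
        rw [hKof] at hj
        simp only [Finset.mem_filter, Finset.mem_univ, true_and] at hj
        exact Nat.not_odd_iff_even.1 hj
  have hKcol :
      (∑ K : Finset (Fin k), ∑ s ∈ (Fintype.piFinset fun _ : Fin k =>
          Finset.range (l + 1)).filter
          (fun s : Fin k → ℕ => (∑ j, s j) ≤ l ∧
            (∀ j ∈ K, Odd (s j)) ∧ ∀ j ∉ K, Even (s j)),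
        ∑ μ ∈ (Fintype.piFinset fun _ : Fin M => Finset.range (l + 1)).filter
            (fun μ : Fin M → ℕ => (∑ i, μ i) = l - ∑ j, s j),
          ((l.factorial : ℝ) * P μ s) • eA M (yof μ K))
      = ∑ s ∈ (Fintype.piFinset fun _ : Fin k => Finset.range (l + 1)).filter
          (fun s : Fin k → ℕ => (∑ j, s j) ≤ l),
        ∑ μ ∈ (Fintype.piFinset fun _ : Fin M => Finset.range (l + 1)).filter
            (fun μ : Fin M → ℕ => (∑ i, μ i) = l - ∑ j, s j),
          ((l.factorial : ℝ) * P μ s) • eA M (yof μ (Kof s)) := by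
    calc _ = ∑ K : Finset (Fin k), ∑ s ∈ (Fintype.piFinset fun _ : Fin k =>
              Finset.range (l + 1)),
            if (∑ j, s j) ≤ l ∧ K = Kof s then
              ∑ μ ∈ (Fintype.piFinset fun _ : Fin M => Finset.range (l + 1)).filter
                  (fun μ : Fin M → ℕ => (∑ i, μ i) = l - ∑ j, s j),
                ((l.factorial : ℝ) * P μ s) • eA M (yof μ K)
            else 0 := by
          refine Finset.sum_congr rfl fun K _ => ?_
          rw [Finset.sum_filter]
          exact Finset.sum_congr rfl fun s _ =>
            if_congr (and_congr_right fun _ => hPar K s) rfl rfl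
      _ = ∑ s ∈ (Fintype.piFinset fun _ : Fin k => Finset.range (l + 1)),
            ∑ K : Finset (Fin k),
            if (∑ j, s j) ≤ l ∧ K = Kof s then
              ∑ μ ∈ (Fintype.piFinset fun _ : Fin M => Finset.range (l + 1)).filter
                  (fun μ : Fin M → ℕ => (∑ i, μ i) = l - ∑ j, s j),
                ((l.factorial : ℝ) * P μ s) • eA M (yof μ K)
            else 0 := Finset.sum_comm
      _ = ∑ s ∈ (Fintype.piFinset fun _ : Fin k => Finset.range (l + 1)),
            if (∑ j, s j) ≤ l then
              ∑ μ ∈ (Fintype.piFinset fun _ : Fin M => Finset.range (l + 1)).filter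
                  (fun μ : Fin M → ℕ => (∑ i, μ i) = l - ∑ j, s j),
                ((l.factorial : ℝ) * P μ s) • eA M (yof μ (Kof s))
            else 0 := by
          refine Finset.sum_congr rfl fun s _ => ?_
          by_cases hb : (∑ j, s j) ≤ l
          · simp only [hb, true_and, if_true]
            rw [show (∑ K : Finset (Fin k), if K = Kof s then
                (∑ μ ∈ (Fintype.piFinset fun _ : Fin M =>
                    Finset.range (l + 1)).filter
                    (fun μ : Fin M → ℕ => (∑ i, μ i) = l - ∑ j, s j),
                  ((l.factorial : ℝ) * P μ s) • eA M (yof μ K)) else 0)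
              = if Kof s ∈ (univ : Finset (Finset (Fin k))) then
                  (∑ μ ∈ (Fintype.piFinset fun _ : Fin M =>
                      Finset.range (l + 1)).filter
                      (fun μ : Fin M → ℕ => (∑ i, μ i) = l - ∑ j, s j),
                    ((l.factorial : ℝ) * P μ s) • eA M (yof μ (Kof s))) else 0
              from Finset.sum_ite_eq' univ (Kof s) _]
            simp
          · simp [hb]
      _ = _ := (Finset.sum_filter _ _).symm
  rw [hKcol]
  -- final bijection with piAntidiag
  rw [Finset.sum_sigma']
  refine Finset.sum_nbij' (fun x => Sum.elim x.snd x.fst)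
    (fun g => ⟨fun j => g (Sum.inr j), fun i => g (Sum.inl i)⟩) ?_ ?_ ?_ ?_ ?_
  · rintro ⟨s, μ⟩ hx
    simp only [Finset.mem_sigma, Finset.mem_filter, Fintype.mem_piFinset,
      Finset.mem_range] at hx
    obtain ⟨⟨hs1, hs2⟩, hμ1, hμ2⟩ := hx
    rw [Finset.mem_piAntidiag]
    refine ⟨?_, fun t _ => Finset.mem_univ t⟩
    rw [Fintype.sum_sum_type]
    simp only [Sum.elim_inl, Sum.elim_inr]
    omega
  · intro g hg
    rw [Finset.mem_piAntidiag] at hg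
    obtain ⟨hg1, -⟩ := hg
    rw [Fintype.sum_sum_type] at hg1
    have hle : ∀ t, g t ≤ l := by
      intro t
      have := Finset.single_le_sum (f := g) (fun t _ => Nat.zero_le (g t)) (Finset.mem_univ t)
      rw [Fintype.sum_sum_type] at this
      omega
    simp only [Finset.mem_sigma, Finset.mem_filter, Fintype.mem_piFinset, Finset.mem_range]
    refine ⟨⟨fun j => Nat.lt_succ_of_le (hle _), ?_⟩, fun i => Nat.lt_succ_of_le (hle _), ?_⟩
    · omega
    · omega
  · rintro ⟨s, μ⟩ hx
    simp only [Sum.elim_inl, Sum.elim_inr]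
  · intro g hg
    funext t
    cases t <;> rfl
  · rintro ⟨s, μ⟩ hx
    simp only [Finset.mem_sigma, Finset.mem_filter, Fintype.mem_piFinset,
      Finset.mem_range] at hx
    obtain ⟨⟨hs1, hs2⟩, hμ1, hμ2⟩ := hx
    have hsum : ∑ t, Sum.elim μ s t = l := by
      rw [Fintype.sum_sum_type]
      simp only [Sum.elim_inl, Sum.elim_inr]
      omega
    -- scalar equality and vector equality
    have hvec : yof μ (Kof s) = wv (Sum.elim μ s) := by
      funext i
      have h1 : (∑ i' : Fin M, Sum.elim μ s (Sum.inl i') • δ i') i = (μ i : ZMod 2) := by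
        rw [Finset.sum_apply]
        simp only [Sum.elim_inl, Pi.smul_apply, hδ, Pi.single_apply, smul_eq_mul,
          nsmul_eq_mul, mul_ite, mul_one, mul_zero]
        simp
      have h2 : (∑ j : Fin k, Sum.elim μ s (Sum.inr j) • χ j) i
          = ∑ j ∈ Kof s, (if i ∈ U j then (1 : ZMod 2) else 0) := by
        rw [Finset.sum_apply, hKof, Finset.sum_filter]
        refine Finset.sum_congr rfl fun j _ => ?_
        rw [hχ]
        simp only [Pi.smul_apply, Sum.elim_inr, nsmul_eq_mul, natCast_zmod2 (s j)]
        by_cases h : Odd (s j) <;> by_cases h' : i ∈ U j <;> simp [h, h']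
      rw [hwv]
      simp only [Pi.add_apply]
      rw [h1, h2, hyof]
    have hco : (l.factorial : ℝ) * P μ s
        = (Nat.multinomial univ (Sum.elim μ s) : ℝ) *
            ((∏ i, c i ^ (Sum.elim μ s) (Sum.inl i)) *
              ∏ j, d j ^ (Sum.elim μ s) (Sum.inr j)) := by
      have hspec := Nat.multinomial_spec (univ : Finset (Fin M ⊕ Fin k)) (Sum.elim μ s)
      rw [hsum] at hspec
      have hfact : (∏ t, (Sum.elim μ s t).factorial)
          = (∏ i, (μ i).factorial) * ∏ j, (s j).factorial := by
        rw [Fintype.prod_sum_type]; rfl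
      rw [hfact] at hspec
      have hspecR : ((∏ i, ((μ i).factorial : ℝ)) * ∏ j, ((s j).factorial : ℝ)) *
          (Nat.multinomial univ (Sum.elim μ s) : ℝ) = (l.factorial : ℝ) := by
        exact_mod_cast hspec
      have hB1 : (∏ i, ((μ i).factorial : ℝ)) ≠ 0 :=
        Finset.prod_ne_zero_iff.2 fun i _ =>
          Nat.cast_ne_zero.2 (Nat.factorial_ne_zero _)
      have hB2 : (∏ j, ((s j).factorial : ℝ)) ≠ 0 :=
        Finset.prod_ne_zero_iff.2 fun j _ =>
          Nat.cast_ne_zero.2 (Nat.factorial_ne_zero _)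
      rw [hP]
      simp only [Sum.elim_inl, Sum.elim_inr]
      rw [Finset.prod_div_distrib, Finset.prod_div_distrib, ← hspecR]
      field_simp
    rw [hvec, hco]

/-- The monoid hom sending a mod-2 exponent vector to the product of powers of `z`. -/
noncomputable def zhom {R : Type*} [Monoid R] {M : ℕ} (z : Fin M → R)
    (hz : ∀ i, z i ^ 2 = 1) (hcomm : ∀ i j, z i * z j = z j * z i) :
    Multiplicative (Fin M → ZMod 2) →* R where
  toFun g := (List.ofFn fun i => z i ^ ((Multiplicative.toAdd g) i).val).prod
  map_one' := by
    refine List.prod_eq_one ?_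
    intro x hx
    obtain ⟨i, rfl⟩ := List.mem_ofFn.1 hx
    show z i ^ ((Multiplicative.toAdd (1 : Multiplicative (Fin M → ZMod 2))) i).val = 1
    rw [show ((Multiplicative.toAdd (1 : Multiplicative (Fin M → ZMod 2))) i).val = 0 from rfl,
      pow_zero]
  map_mul' a b := by
    have h1 : (fun i => z i ^ ((Multiplicative.toAdd (a * b)) i).val)
        = fun i => z i ^ ((Multiplicative.toAdd a) i).val *
            z i ^ ((Multiplicative.toAdd b) i).val := by
      funext i; exact pow_val_add _ (hz i) _ _
    show (List.ofFn fun i => z i ^ ((Multiplicative.toAdd (a * b)) i).val).prod =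
      (List.ofFn fun i => z i ^ ((Multiplicative.toAdd a) i).val).prod *
      (List.ofFn fun i => z i ^ ((Multiplicative.toAdd b) i).val).prod
    rw [h1]
    exact ofFn_prod_mul _ _ fun i j => Commute.pow_pow (hcomm i j) _ _

/-- symmetric l-th power expansion for nearly independent commuting
Hamiltonians whose symplectic code has dimension k. Here `M` plays the role of
`m - k`: the variables are `z₁,…,z_{m-k}`, the coefficients of the independent
terms are `c`, and the coefficients `c_{m-k+1},…,c_m` of the dependent terms
`Π_{i ∈ U_j} z_i` are `d`. -/
theorem stmt_9 (R : Type*) [Ring R] [Algebra ℝ R] (M k l : ℕ)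
    (z : Fin M → R)
    (hz : ∀ i, z i ^ 2 = 1)
    (hcomm : ∀ i j, z i * z j = z j * z i)
    (U : Fin k → Finset (Fin M))
    (c : Fin M → ℝ) (d : Fin k → ℝ) :
    ((∑ i, c i • z i) +
        ∑ j, d j • (List.ofFn fun i : Fin M => if i ∈ U j then z i else 1).prod) ^ l =
      ∑ y : Fin M → ZMod 2,
        ((l.factorial : ℝ) *
            ∑ K : Finset (Fin k),
              ∑ s ∈ (Fintype.piFinset fun _ : Fin k => Finset.range (l + 1)).filter
                  (fun s : Fin k → ℕ =>
                    (∑ j, s j) ≤ l ∧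
                    (∀ j ∈ K, Odd (s j)) ∧ ∀ j ∉ K, Even (s j)),
                ∑ μ ∈ (Fintype.piFinset fun _ : Fin M => Finset.range (l + 1)).filter
                    (fun μ : Fin M → ℕ =>
                      (∑ i, μ i) = l - (∑ j, s j) ∧
                      ∀ i, (μ i : ZMod 2) =
                        y i + ∑ j ∈ K, (if i ∈ U j then (1 : ZMod 2) else 0)),
                  (∏ i, c i ^ μ i / ((μ i).factorial : ℝ)) *
                    ∏ j, d j ^ s j / ((s j).factorial : ℝ)) •
          (List.ofFn fun i : Fin M => z i ^ (y i).val).prod := by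
  classical
  set G := Multiplicative (Fin M → ZMod 2)
  set Φ : MonoidAlgebra ℝ G →ₐ[ℝ] R := MonoidAlgebra.lift ℝ R G (zhom z hz hcomm) with hΦ
  have hΦe : ∀ v : Fin M → ZMod 2,
      Φ (eA M v) = (List.ofFn fun i => z i ^ (v i).val).prod := by
    intro v
    rw [hΦ, eA, MonoidAlgebra.lift_of]
    rfl
  set δ : Fin M → (Fin M → ZMod 2) := fun i => Pi.single i 1 with hδ
  set χ : Fin k → (Fin M → ZMod 2) := fun j i => if i ∈ U j then 1 else 0 with hχ
  -- the z_i are images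
  have hΦδ : ∀ i, Φ (eA M (δ i)) = z i := by
    intro i
    rw [hΦe]
    have := ofFn_prod_single (fun i' => z i' ^ ((δ i i').val)) i ?_
    · rw [this, hδ]
      simp [show ((1 : ZMod 2)).val = 1 from rfl]
    · intro j hj
      rw [hδ]
      simp [Pi.single_apply, if_neg hj, show ((0 : ZMod 2)).val = 0 from rfl]
  have hΦχ : ∀ j, Φ (eA M (χ j)) =
      (List.ofFn fun i : Fin M => if i ∈ U j then z i else 1).prod := by
    intro j
    rw [hΦe]
    have : (fun i => z i ^ ((χ j i).val)) = fun i : Fin M => if i ∈ U j then z i else 1 := by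
      funext i
      rw [hχ]
      by_cases h : i ∈ U j <;>
        simp [h, show ((1 : ZMod 2)).val = 1 from rfl, show ((0 : ZMod 2)).val = 0 from rfl]
    rw [this]
  -- main identity in the monoid algebra
  have main : ((∑ i, c i • eA M (δ i)) + ∑ j, d j • eA M (χ j)) ^ l =
      ∑ y : Fin M → ZMod 2,
        ((l.factorial : ℝ) *
            ∑ K : Finset (Fin k),
              ∑ s ∈ (Fintype.piFinset fun _ : Fin k => Finset.range (l + 1)).filter
                  (fun s : Fin k → ℕ =>
                    (∑ j, s j) ≤ l ∧
                    (∀ j ∈ K, Odd (s j)) ∧ ∀ j ∉ K, Even (s j)),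
                ∑ μ ∈ (Fintype.piFinset fun _ : Fin M => Finset.range (l + 1)).filter
                    (fun μ : Fin M → ℕ =>
                      (∑ i, μ i) = l - (∑ j, s j) ∧
                      ∀ i, (μ i : ZMod 2) =
                        y i + ∑ j ∈ K, (if i ∈ U j then (1 : ZMod 2) else 0)),
                  (∏ i, c i ^ μ i / ((μ i).factorial : ℝ)) *
                    ∏ j, d j ^ s j / ((s j).factorial : ℝ)) • eA M y :=
    main_alg M k l U c d
  calc ((∑ i, c i • z i) +
        ∑ j, d j • (List.ofFn fun i : Fin M => if i ∈ U j then z i else 1).prod) ^ l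
      = Φ (((∑ i, c i • eA M (δ i)) + ∑ j, d j • eA M (χ j)) ^ l) := by
        rw [map_pow, map_add, map_sum, map_sum]
        simp_rw [map_smul, hΦδ, hΦχ]
    _ = _ := by
        rw [main, map_sum]
        simp_rw [map_smul, hΦe]
end

section
/- Let R be an associative unital ring that is an algebra over ℝ, and let z₁,…,z_m ∈ R satisfy z_i² = 1 for all i and, for each i ≠ j, either z_i z_j = z_j z_i or z_i z_j = −z_j z_i; let G be the anticommutation graph on {1,…,m} with edge {i,j} iff z_i z_j = −z_j z_i. Let c = (c₁,…,c_m) ∈ ℝ^m. Then for every s ∈ ℕ, ( Σ_{i=1}^m c_i z_i )^s = Σ_{y ∈ 𝔽₂^m} β_G^{(s)}(y, c) · z₁^{y₁} ⋯ z_m^{y_m}. Consequently, for any a₀,…,a_l ∈ ℝ, Σ_{s=0}^{l} a_s ( Σ_i c_i z_i )^s = Σ_{s=0}^{l} a_s Σ_{y ∈ 𝔽₂^m} β_G^{(s)}(y,c) · z₁^{y₁} ⋯ z_m^{y_m}. -/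
/-- The weighted β-function of order `s` of the anticommutation graph given by the
adjacency relation `Adj`:
`β_G^{(s)}(y, c) = Σ_{|μ| = s, μ ≡ y (mod 2)} c^μ Σ_{π ∈ S(μ)} sgn_{G,μ}(π)`,
where `S(μ)` is the set of words of length `s` containing each index `i` exactly
`μ_i` times and the sign counts edge-inversions. -/
noncomputable def betaFn (m : ℕ) (Adj : Fin m → Fin m → Prop) [DecidableRel Adj]
    (s : ℕ) (y : Fin m → ZMod 2) (c : Fin m → ℝ) : ℝ :=
  ∑ μ ∈ (Fintype.piFinset fun _ : Fin m => Finset.range (s + 1)).filter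
      (fun μ : Fin m → ℕ => (∑ i, μ i) = s ∧ ∀ i, ((μ i : ZMod 2) = y i)),
    (∏ i, c i ^ μ i) *
      ∑ π ∈ (Finset.univ : Finset (Fin s → Fin m)).filter
          (fun π => ∀ i, (Finset.univ.filter fun a => π a = i).card = μ i),
        (-1 : ℝ) ^ (Finset.univ.filter (fun p : Fin s × Fin s =>
            p.1 < p.2 ∧ π p.2 < π p.1 ∧ Adj (π p.1) (π p.2))).card


noncomputable def Pword {R : Type*} [Ring R] {m : ℕ} (z : Fin m → R) (y : Fin m → ZMod 2) : R :=
  (List.ofFn fun i : Fin m => z i ^ (y i).val).prod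

lemma Pword_succ {R : Type*} [Ring R] {m : ℕ} (z : Fin (m+1) → R) (y : Fin (m+1) → ZMod 2) :
    Pword z y = z 0 ^ (y 0).val * Pword (z ∘ Fin.succ) (y ∘ Fin.succ) := by
  simp [Pword, List.ofFn_succ]

lemma zpow_step {R : Type*} [Ring R] (x : R) (hx : x ^ 2 = 1) (v : ZMod 2) :
    x * x ^ v.val = x ^ (v + 1).val := by
  obtain rfl | rfl : v = 0 ∨ v = 1 := by revert v; decide
  all_goals
    simp_all [pow_succ, show ZMod.val (1 : ZMod 2) = 1 from rfl,
      show ((1 : ZMod 2) + 1) = 0 from rfl]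

lemma comm_pow {R : Type*} [Ring R] [Algebra ℝ R] (x w : R) (h : x * w = -(w * x)) (v : ZMod 2) :
    x * w ^ v.val = ((-1 : ℝ) ^ v.val) • (w ^ v.val * x) := by
  obtain rfl | rfl : v = 0 ∨ v = 1 := by revert v; decide
  · simp [show ZMod.val (0 : ZMod 2) = 0 from rfl]
  · simp [show ZMod.val (1 : ZMod 2) = 1 from rfl, h]

lemma keyA {R : Type*} [Ring R] [Algebra ℝ R] :
    ∀ (m : ℕ) (z : Fin m → R) (Adj : Fin m → Fin m → Prop) [DecidableRel Adj],
    (∀ i, z i ^ 2 = 1) →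
    (∀ i j, Adj i j → z i * z j = -(z j * z i)) →
    (∀ i j, i ≠ j → ¬Adj i j → z i * z j = z j * z i) →
    ∀ (i : Fin m) (y : Fin m → ZMod 2),
      z i * Pword z y =
        (∏ j, if j < i ∧ Adj i j then (-1 : ℝ) ^ (y j).val else 1) •
          Pword z (Function.update y i (y i + 1)) := by
  intro m
  induction m with
  | zero => intro z Adj _ _ _ _ i; exact i.elim0
  | succ n ih =>
    intro z Adj _ hz hanti hcomm i y
    have h0 : ∀ j : Fin n, (Fin.succ j : Fin (n+1)) ≠ 0 := fun j => Fin.succ_ne_zero j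
    induction i using Fin.cases with
    | zero =>
      rw [Pword_succ, Pword_succ]
      have hupd0 : Function.update y 0 (y 0 + 1) ∘ Fin.succ = y ∘ Fin.succ := by
        funext j; simp [Function.update_apply, h0 j]
      have : (∏ j : Fin (n+1), if j < 0 ∧ Adj 0 j then (-1 : ℝ) ^ (y j).val else 1) = 1 := by
        apply Finset.prod_eq_one; intro j _
        simp [Fin.not_lt_zero]
      rw [this, one_smul, hupd0, ← mul_assoc, zpow_step (z 0) (hz 0) (y 0)]
      simp [Function.update_self]
    | succ i' =>
      rw [Pword_succ]
      have hpos : (0 : Fin (n+1)) < i'.succ := Fin.succ_pos i'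
      set e0 : ℝ := if (0 : Fin (n+1)) < i'.succ ∧ Adj i'.succ 0 then (-1:ℝ) ^ (y 0).val else 1
        with he0
      have hcase : z i'.succ * z 0 ^ (y 0).val = e0 • (z 0 ^ (y 0).val * z i'.succ) := by
        rw [he0]
        by_cases hA : Adj i'.succ 0
        · rw [if_pos ⟨hpos, hA⟩]
          exact comm_pow _ _ (hanti _ _ hA) (y 0)
        · rw [if_neg (by tauto), one_smul]
          exact ((show Commute (z i'.succ) (z 0) from
            hcomm i'.succ 0 (Fin.succ_ne_zero i') hA).pow_right _).eq
      letI : DecidableRel (fun a b : Fin n => Adj a.succ b.succ) :=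
        fun a b => (inferInstance : Decidable (Adj a.succ b.succ))
      have hIH := ih (z ∘ Fin.succ) (fun a b => Adj a.succ b.succ)
        (fun i => hz i.succ)
        (fun i j h => hanti i.succ j.succ h)
        (fun i j h hn => hcomm i.succ j.succ (fun e => h (Fin.succ_injective n e)) hn)
        i' (y ∘ Fin.succ)
      rw [← mul_assoc, hcase, smul_mul_assoc, mul_assoc]
      rw [show z i'.succ = (z ∘ Fin.succ) i' from rfl, hIH]
      rw [mul_smul_comm, smul_smul]
      have hprod : (∏ j : Fin (n+1), if j < i'.succ ∧ Adj i'.succ j then (-1 : ℝ) ^ (y j).val else 1)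
          = e0 * ∏ j : Fin n, if j < i' ∧ Adj i'.succ j.succ then (-1 : ℝ) ^ ((y ∘ Fin.succ) j).val else 1 := by
        rw [Fin.prod_univ_succ, he0]
        congr 1
        apply Finset.prod_congr rfl
        intro j _
        congr 2
        simp [Fin.succ_lt_succ_iff]
      rw [hprod]
      congr 1
      rw [Pword_succ z (Function.update y i'.succ (y i'.succ + 1))]
      have h1 : Function.update y i'.succ (y i'.succ + 1) 0 = y 0 := by
        rw [Function.update_apply, if_neg (Fin.succ_ne_zero i').symm]
      have h2 : Function.update y i'.succ (y i'.succ + 1) ∘ Fin.succ =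
          Function.update (y ∘ Fin.succ) i' ((y ∘ Fin.succ) i' + 1) := by
        funext j
        simp only [Function.comp_apply, Function.update_apply]
        by_cases hji : j = i'
        · subst hji; simp
        · rw [if_neg (fun e => hji (Fin.succ_injective n e)), if_neg hji]
      rw [h1, h2]

lemma neg_one_pow_cast (k : ℕ) : ((-1:ℝ)) ^ (ZMod.val ((k : ℕ) : ZMod 2)) = (-1:ℝ) ^ k := by
  rw [ZMod.val_natCast, ← neg_one_pow_eq_pow_mod_two]

lemma keyB {R : Type*} [Ring R] [Algebra ℝ R] {m : ℕ} (z : Fin m → R)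
    (Adj : Fin m → Fin m → Prop) [DecidableRel Adj]
    (hz : ∀ i, z i ^ 2 = 1)
    (hanti : ∀ i j, Adj i j → z i * z j = -(z j * z i))
    (hcomm : ∀ i j, i ≠ j → ¬Adj i j → z i * z j = z j * z i) :
    ∀ (s : ℕ) (π : Fin s → Fin m),
      (List.ofFn fun a => z (π a)).prod =
        ((-1 : ℝ) ^ (Finset.univ.filter (fun p : Fin s × Fin s =>
            p.1 < p.2 ∧ π p.2 < π p.1 ∧ Adj (π p.1) (π p.2))).card) •
          Pword z (fun i => (((Finset.univ.filter fun a => π a = i).card : ℕ) : ZMod 2)) := by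
  intro s
  induction s with
  | zero =>
    intro π
    simp [Pword, show ∀ i : Fin m, ((Finset.univ : Finset (Fin 0)).filter fun a => π a = i) = ∅
      from fun i => rfl]
  | succ s ih =>
    intro π
    set i0 := π 0 with hi0
    set π' : Fin s → Fin m := π ∘ Fin.succ with hπ'
    have hofn : (List.ofFn fun a : Fin (s+1) => z (π a)).prod
        = z i0 * (List.ofFn fun a : Fin s => z (π' a)).prod := by
      simp [List.ofFn_succ, hπ', hi0]
    set μ' : Fin m → ℕ := fun i => (Finset.univ.filter fun a => π' a = i).card with hμ'
    set y' : Fin m → ZMod 2 := fun i => ((μ' i : ℕ) : ZMod 2) with hy'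
    rw [hofn, ih π', mul_smul_comm, keyA m z Adj hz hanti hcomm i0, smul_smul]
    -- Id1 : the updated exponent vector equals the fiber counts of π
    have hId1 : Function.update y' i0 (y' i0 + 1) =
        fun i => (((Finset.univ.filter fun a : Fin (s+1) => π a = i).card : ℕ) : ZMod 2) := by
      funext i
      have hc : (Finset.univ.filter fun a : Fin (s+1) => π a = i).card
          = (if π 0 = i then 1 else 0) + μ' i := by
        simp only [hμ', hπ', Finset.card_filter, Fin.sum_univ_succ, Function.comp_apply]
      rw [hc, Function.update_apply]
      by_cases hii : i = i0
      · subst hii; rw [if_pos rfl, if_pos hi0.symm, hy']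
        push_cast; ring
      · rw [if_neg hii, if_neg (fun e => hii e.symm), hy']
        simp
    -- Id2 : inversion count splits
    set N0 := (Finset.univ.filter fun b : Fin s => π' b < i0 ∧ Adj i0 (π' b)).card with hN0
    have hId2 : (Finset.univ.filter (fun p : Fin (s+1) × Fin (s+1) =>
          p.1 < p.2 ∧ π p.2 < π p.1 ∧ Adj (π p.1) (π p.2))).card
        = N0 + (Finset.univ.filter (fun p : Fin s × Fin s =>
          p.1 < p.2 ∧ π' p.2 < π' p.1 ∧ Adj (π' p.1) (π' p.2))).card := by
      rw [hN0]
      simp only [Finset.card_filter, Fintype.sum_prod_type]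
      rw [Fin.sum_univ_succ]
      simp only [Fin.sum_univ_succ, Fin.not_lt_zero, Fin.succ_pos, Fin.succ_lt_succ_iff,
        false_and, if_false, true_and, hπ', Function.comp_apply, hi0]
      ring
    -- Id3 : the eps product is (-1) ^ N0
    have hId3 : (∏ j, if j < i0 ∧ Adj i0 j then (-1 : ℝ) ^ (y' j).val else 1)
        = (-1 : ℝ) ^ N0 := by
      have h1 : (∏ j, if j < i0 ∧ Adj i0 j then (-1 : ℝ) ^ (y' j).val else 1)
          = ∏ j ∈ Finset.univ.filter (fun j => j < i0 ∧ Adj i0 j), (-1 : ℝ) ^ μ' j := by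
        rw [Finset.prod_filter]
        apply Finset.prod_congr rfl
        intro j _
        by_cases hj : j < i0 ∧ Adj i0 j
        · rw [if_pos hj, if_pos hj, hy', neg_one_pow_cast]
        · rw [if_neg hj, if_neg hj]
      have h2 : N0 = ∑ j ∈ Finset.univ.filter (fun j => j < i0 ∧ Adj i0 j), μ' j := by
        rw [hN0, Finset.card_eq_sum_card_fiberwise
          (f := π') (t := Finset.univ.filter (fun j => j < i0 ∧ Adj i0 j))
          (fun b hb => by
            simp only [Finset.mem_coe, Finset.mem_filter, Finset.mem_univ, true_and] at hb ⊢
            exact hb)]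
        apply Finset.sum_congr rfl
        intro j hj
        simp only [Finset.mem_filter, Finset.mem_univ, true_and] at hj
        rw [hμ', Finset.filter_filter]
        congr 1
        apply Finset.filter_congr
        intro b _
        constructor
        · tauto
        · intro hb; exact ⟨hb ▸ hj, hb⟩
      rw [h1, h2, Finset.prod_pow_eq_pow_sum]
    rw [hId1, hId2, hId3, pow_add]
    ring_nf

lemma keyC {R : Type*} [Ring R] [Algebra ℝ R] {m : ℕ} (z : Fin m → R) (c : Fin m → ℝ) :
    ∀ s : ℕ, (∑ i, c i • z i) ^ s =
      ∑ π : Fin s → Fin m, (∏ a, c (π a)) • (List.ofFn fun a => z (π a)).prod := by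
  intro s
  induction s with
  | zero => simp
  | succ s ih =>
    rw [pow_succ', ih, Finset.sum_mul]
    rw [← Equiv.sum_comp (Fin.consEquiv fun _ : Fin (s+1) => Fin m)
      (fun π : Fin (s+1) → Fin m => (∏ a, c (π a)) • (List.ofFn fun a => z (π a)).prod)]
    rw [Fintype.sum_prod_type]
    apply Finset.sum_congr rfl
    intro i _
    rw [Finset.mul_sum]
    apply Finset.sum_congr rfl
    intro τ _
    simp only [Fin.consEquiv_apply, Fin.prod_univ_succ, Fin.cons_zero, Fin.cons_succ,
      List.ofFn_succ, List.prod_cons]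
    rw [smul_mul_assoc, mul_smul_comm, smul_smul]

theorem stmt_13_aux (R : Type*) [Ring R] [Algebra ℝ R] (m : ℕ)
    (z : Fin m → R)
    (hz : ∀ i, z i ^ 2 = 1)
    (Adj : Fin m → Fin m → Prop) [DecidableRel Adj]
    (hsymm : ∀ i j, Adj i j → Adj j i)
    (hanti : ∀ i j, Adj i j → z i * z j = -(z j * z i))
    (hcomm : ∀ i j, i ≠ j → ¬Adj i j → z i * z j = z j * z i)
    (c : Fin m → ℝ)
    (betaFn : ∀ (m : ℕ) (Adj : Fin m → Fin m → Prop) [DecidableRel Adj],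
      ℕ → (Fin m → ZMod 2) → (Fin m → ℝ) → ℝ)
    (hbeta : ∀ (s : ℕ) (y : Fin m → ZMod 2), betaFn m Adj s y c =
      ∑ μ ∈ (Fintype.piFinset fun _ : Fin m => Finset.range (s + 1)).filter
          (fun μ : Fin m → ℕ => (∑ i, μ i) = s ∧ ∀ i, ((μ i : ZMod 2) = y i)),
        (∏ i, c i ^ μ i) *
          ∑ π ∈ (Finset.univ : Finset (Fin s → Fin m)).filter
              (fun π => ∀ i, (Finset.univ.filter fun a => π a = i).card = μ i),
            (-1 : ℝ) ^ (Finset.univ.filter (fun p : Fin s × Fin s =>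
                p.1 < p.2 ∧ π p.2 < π p.1 ∧ Adj (π p.1) (π p.2))).card) :
    ∀ s : ℕ, (∑ i, c i • z i) ^ s =
      ∑ y : Fin m → ZMod 2, betaFn m Adj s y c • Pword z y := by
  intro s
  set sgn : (Fin s → Fin m) → ℝ := fun π =>
    (-1 : ℝ) ^ (Finset.univ.filter (fun p : Fin s × Fin s =>
      p.1 < p.2 ∧ π p.2 < π p.1 ∧ Adj (π p.1) (π p.2))).card with hsgn
  set M : (Fin s → Fin m) → (Fin m → ℕ) := fun π i => (Finset.univ.filter fun a => π a = i).card
    with hM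
  set Y : (Fin s → Fin m) → (Fin m → ZMod 2) := fun π i => ((M π i : ℕ) : ZMod 2) with hY
  have hMsum : ∀ π : Fin s → Fin m, (∑ i, M π i) = s := by
    intro π
    have := Finset.card_eq_sum_card_fiberwise
      (s := (Finset.univ : Finset (Fin s))) (t := (Finset.univ : Finset (Fin m)))
      (f := π) (fun a _ => Finset.mem_univ _)
    simpa [hM] using this.symm
  calc (∑ i, c i • z i) ^ s
      = ∑ π : Fin s → Fin m, (∏ a, c (π a)) • (List.ofFn fun a => z (π a)).prod :=
        keyC z c s
    _ = ∑ π : Fin s → Fin m, ((∏ a, c (π a)) * sgn π) • Pword z (Y π) := by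
        apply Finset.sum_congr rfl
        intro π _
        rw [keyB z Adj hz hanti hcomm s π, smul_smul]
    _ = ∑ y : Fin m → ZMod 2, ∑ π ∈ Finset.univ.filter (fun π => Y π = y),
          ((∏ a, c (π a)) * sgn π) • Pword z (Y π) :=
        (Finset.sum_fiberwise _ _ _).symm
    _ = ∑ y : Fin m → ZMod 2, betaFn m Adj s y c • Pword z y := by
        apply Finset.sum_congr rfl
        intro y _
        rw [hbeta s y, Finset.sum_smul]
        set T := (Fintype.piFinset fun _ : Fin m => Finset.range (s + 1)).filter
          (fun μ : Fin m → ℕ => (∑ i, μ i) = s ∧ ∀ i, ((μ i : ZMod 2) = y i)) with hT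
        have hmaps : ∀ π ∈ Finset.univ.filter (fun π => Y π = y), M π ∈ T := by
          intro π hπ
          simp only [Finset.mem_filter, Finset.mem_univ, true_and] at hπ
          rw [hT, Finset.mem_filter]
          refine ⟨?_, hMsum π, fun i => ?_⟩
          · rw [Fintype.mem_piFinset]
            intro i
            rw [Finset.mem_range]
            exact Nat.lt_succ_of_le (le_trans (Finset.card_filter_le _ _) (by simp))
          · rw [← congrFun hπ i, hY]
        rw [← Finset.sum_fiberwise_of_maps_to hmaps]
        apply Finset.sum_congr rfl
        intro μ hμ
        rw [hT, Finset.mem_filter] at hμ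
        obtain ⟨-, hμs, hμy⟩ := hμ
        have hset : (Finset.univ.filter (fun π => Y π = y)).filter (fun π => M π = μ)
            = Finset.univ.filter (fun π : Fin s → Fin m =>
                ∀ i, (Finset.univ.filter fun a => π a = i).card = μ i) := by
          ext π
          simp only [Finset.mem_filter, Finset.mem_univ, true_and]
          constructor
          · rintro ⟨-, h2⟩ i
            rw [← congrFun h2 i]
          · intro h
            have hMμ : M π = μ := funext fun i => h i
            refine ⟨?_, hMμ⟩
            funext i
            rw [hY]
            simp only
            rw [congrFun hMμ i, hμy i]
        rw [hset, Finset.mul_sum, Finset.sum_smul]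
        apply Finset.sum_congr rfl
        intro π hπ
        simp only [Finset.mem_filter, Finset.mem_univ, true_and] at hπ
        have hMμ : M π = μ := funext fun i => hπ i
        have hYy : Y π = y := by
          funext i
          rw [hY]; simp only
          rw [congrFun hMμ i, hμy i]
        have hprodc : (∏ a, c (π a)) = ∏ i, c i ^ μ i := by
          rw [← Finset.prod_fiberwise (Finset.univ : Finset (Fin s)) π (fun a => c (π a))]
          apply Finset.prod_congr rfl
          intro i _
          have hcc : ∀ a ∈ Finset.univ.filter fun a => π a = i, c (π a) = c i := by
            intro a ha
            rw [(Finset.mem_filter.mp ha).2]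
          rw [Finset.prod_congr rfl hcc, Finset.prod_const, ← congrFun hMμ i]
        rw [hYy, hprodc]

/-- noncommuting univariate polynomial expansion in terms of the
weighted β-function. -/
theorem stmt_13 (R : Type*) [Ring R] [Algebra ℝ R] (m : ℕ)
    (z : Fin m → R)
    (hz : ∀ i, z i ^ 2 = 1)
    (Adj : Fin m → Fin m → Prop) [DecidableRel Adj]
    (hsymm : ∀ i j, Adj i j → Adj j i)
    (hanti : ∀ i j, Adj i j → z i * z j = -(z j * z i))
    (hcomm : ∀ i j, i ≠ j → ¬Adj i j → z i * z j = z j * z i)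
    (c : Fin m → ℝ) :
    (∀ s : ℕ,
        (∑ i, c i • z i) ^ s =
          ∑ y : Fin m → ZMod 2,
            betaFn m Adj s y c • (List.ofFn fun i : Fin m => z i ^ (y i).val).prod) ∧
      ∀ (l : ℕ) (a : ℕ → ℝ),
        ∑ s ∈ Finset.range (l + 1), a s • (∑ i, c i • z i) ^ s =
          ∑ s ∈ Finset.range (l + 1), a s •
            ∑ y : Fin m → ZMod 2,
              betaFn m Adj s y c • (List.ofFn fun i : Fin m => z i ^ (y i).val).prod := by
  have key := stmt_13_aux R m z hz Adj hsymm hanti hcomm c betaFn (fun s y => rfl)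
  have h1 : ∀ s : ℕ,
      (∑ i, c i • z i) ^ s =
        ∑ y : Fin m → ZMod 2,
          betaFn m Adj s y c • (List.ofFn fun i : Fin m => z i ^ (y i).val).prod := by
    intro s
    have := key s
    simpa only [Pword] using this
  exact ⟨h1, fun l a => Finset.sum_congr rfl fun s _ => by rw [h1 s]⟩
end

section
/- Let G be a (simple, undirected) graph on vertex set {1,…,m}, and suppose {1,…,m} = V₁ ⊔ V₂ ⊔ ⋯ ⊔ V_r is a partition such that no edge of G joins vertices in distinct blocks (for example, the V_t are the connected components of G). Let G_t denote the induced subgraph on V_t, and for y ∈ 𝔽₂^m and c ∈ ℝ^m let y|_{V_t} and c|_{V_t} denote the restrictions to the coordinates in V_t. Then for every s ∈ ℕ and every y ∈ 𝔽₂^m, β_G^{(s)}(y, c) = Σ_{κ ∈ ℤ_{≥0}^r, |κ| = s} ( s! / (κ₁! ⋯ κ_r!) ) · Π_{t=1}^{r} β_{G_t}^{(κ_t)}( y|_{V_t}, c|_{V_t} ). -/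
/-- The weighted β-function of the subgraph induced on the vertex subset `S`,
with `y` and `c` restricted to the coordinates in `S`: the multi-indices `μ` are
supported on `S` and must match the parity of `y` only on `S`. -/
noncomputable def betaOn (m : ℕ) (Adj : Fin m → Fin m → Prop) [DecidableRel Adj]
    (S : Finset (Fin m)) (s : ℕ) (y : Fin m → ZMod 2) (c : Fin m → ℝ) : ℝ :=
  ∑ μ ∈ (Fintype.piFinset fun _ : Fin m => Finset.range (s + 1)).filter
      (fun μ : Fin m → ℕ =>
        (∑ i, μ i) = s ∧ (∀ i ∈ S, (μ i : ZMod 2) = y i) ∧ ∀ i ∉ S, μ i = 0),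
    (∏ i, c i ^ μ i) *
      ∑ π ∈ (Finset.univ : Finset (Fin s → Fin m)).filter
          (fun π => ∀ i, (Finset.univ.filter fun a => π a = i).card = μ i),
        (-1 : ℝ) ^ (Finset.univ.filter (fun p : Fin s × Fin s =>
            p.1 < p.2 ∧ π p.2 < π p.1 ∧ Adj (π p.1) (π p.2))).card


/-- count of occurrences of `i` in `π`. -/
def cnt {n m : ℕ} (π : Fin n → Fin m) (i : Fin m) : ℕ :=
  (Finset.univ.filter fun a => π a = i).card

/-- the sign factor. -/
noncomputable def sgn {m : ℕ} (Adj : Fin m → Fin m → Prop) [DecidableRel Adj] {n : ℕ}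
    (π : Fin n → Fin m) : ℝ :=
  (-1 : ℝ) ^ (Finset.univ.filter (fun p : Fin n × Fin n =>
      p.1 < p.2 ∧ π p.2 < π p.1 ∧ Adj (π p.1) (π p.2))).card

lemma cnt_sum {n m : ℕ} (π : Fin n → Fin m) : ∑ i, cnt π i = n := by
  have := Finset.card_eq_sum_card_fiberwise
    (f := π) (s := Finset.univ) (t := Finset.univ) (fun x _ => Finset.mem_univ _)
  simpa [cnt, Finset.card_univ] using this.symm

lemma cnt_le {n m : ℕ} (π : Fin n → Fin m) (i : Fin m) : cnt π i ≤ n := by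
  simpa [cnt] using (Finset.card_filter_le (Finset.univ : Finset (Fin n)) fun a => π a = i).trans
    (by simp)

lemma sum_mu {m n : ℕ} (P : (Fin m → ℕ) → Prop) [DecidablePred P] (f : (Fin n → Fin m) → ℝ) :
    (∑ μ ∈ (Fintype.piFinset fun _ : Fin m => Finset.range (n + 1)).filter
        (fun μ : Fin m → ℕ => (∑ i, μ i) = n ∧ P μ),
      ∑ π ∈ (Finset.univ : Finset (Fin n → Fin m)).filter
          (fun π => ∀ i, (Finset.univ.filter fun a => π a = i).card = μ i), f π)
    = ∑ π ∈ (Finset.univ : Finset (Fin n → Fin m)).filter (fun π => P (cnt π)), f π := by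
  classical
  rw [← Finset.sum_fiberwise_of_maps_to (g := fun π : Fin n → Fin m => cnt π)
      (t := (Fintype.piFinset fun _ : Fin m => Finset.range (n + 1)).filter
        (fun μ : Fin m → ℕ => (∑ i, μ i) = n ∧ P μ)) ?hmaps f]
  · refine Finset.sum_congr rfl fun μ hμ => Finset.sum_congr ?_ fun _ _ => rfl
    have hPμ : P μ := ((Finset.mem_filter.mp hμ).2).2
    ext π
    simp only [Finset.mem_filter, Finset.mem_univ, true_and]
    constructor
    · intro h
      have hfe : cnt π = μ := funext h
      exact ⟨by rw [hfe]; exact hPμ, hfe⟩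
    · rintro ⟨h1, h2⟩ i
      exact congrFun h2 i
  case hmaps =>
    intro π hπ
    have hP : P (cnt π) := (Finset.mem_filter.mp hπ).2
    simp only [Finset.mem_filter, Fintype.mem_piFinset, Finset.mem_range]
    exact ⟨fun i => Nat.lt_succ_of_le (cnt_le π i), cnt_sum π, hP⟩

lemma count_aux (s : ℕ) : ∀ {r : ℕ} (κ : Fin r → ℕ), (∑ t, κ t) = s →
    ((Finset.univ.filter fun σ : Fin s → Fin r => ∀ t, cnt σ t = κ t).card)
      * ∏ t, (κ t).factorial = s.factorial := by
  induction s with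
  | zero =>
    intro r κ hκ
    have hκ0 : ∀ t, κ t = 0 := by
      intro t
      exact (Finset.sum_eq_zero_iff.mp hκ) t (Finset.mem_univ t)
    have h1 : (Finset.univ.filter fun σ : Fin 0 → Fin r => ∀ t, cnt σ t = κ t)
        = Finset.univ := by
      refine Finset.filter_true_of_mem fun σ _ t => ?_
      simp [cnt, hκ0 t]
    rw [h1]
    simp [Finset.card_univ, hκ0, Nat.factorial]
  | succ s ih =>
    intro r κ hκ
    classical
    have hsnoc : ∀ (σ' : Fin s → Fin r) (t u : Fin r),
        cnt (Fin.snoc σ' t) u = cnt σ' u + if t = u then 1 else 0 := by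
      intro σ' t u
      simp only [cnt, Finset.card_filter]
      rw [Fin.sum_univ_castSucc]
      simp [Fin.snoc_castSucc, Fin.snoc_last]
    have hterm : ∀ t : Fin r,
        ((Finset.univ.filter fun σ : Fin (s+1) → Fin r => ∀ t, cnt σ t = κ t).filter
            fun σ => σ (Fin.last s) = t).card * ∏ u, (κ u).factorial
          = s.factorial * κ t := by
      intro t
      by_cases h0 : κ t = 0
      · have hempty : ((Finset.univ.filter fun σ : Fin (s+1) → Fin r => ∀ t, cnt σ t = κ t).filter
            fun σ => σ (Fin.last s) = t) = ∅ := by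
          refine Finset.filter_eq_empty_iff.mpr fun {σ} hσ => ?_
          intro hlast
          have h1 : cnt σ t = κ t := (Finset.mem_filter.mp hσ).2 t
          have h2 : Fin.last s ∈ Finset.univ.filter fun a => σ a = t := by
            simp [hlast]
          have h3 : 0 < cnt σ t := Finset.card_pos.mpr ⟨_, h2⟩
          omega
        rw [hempty]; simp [h0]
      · have hsum' : ∑ u, Function.update κ t (κ t - 1) u = s := by
          have h1 : ∑ u, Function.update κ t (κ t - 1) u
              = (κ t - 1) + ∑ u ∈ Finset.univ.erase t, κ u := by
            rw [← Finset.add_sum_erase _ _ (Finset.mem_univ t), Function.update_self]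
            congr 1
            exact Finset.sum_congr rfl fun u hu =>
              Function.update_of_ne (Finset.ne_of_mem_erase hu) _ _
          have h2 : κ t + ∑ u ∈ Finset.univ.erase t, κ u = s + 1 := by
            rw [Finset.add_sum_erase _ _ (Finset.mem_univ t), hκ]
          omega
        have hprod : ∏ u, (κ u).factorial
            = κ t * ∏ u, (Function.update κ t (κ t - 1) u).factorial := by
          have h1 : ∏ u, (Function.update κ t (κ t - 1) u).factorial
              = (κ t - 1).factorial * ∏ u ∈ Finset.univ.erase t, (κ u).factorial := by
            rw [← Finset.mul_prod_erase _ _ (Finset.mem_univ t), Function.update_self]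
            congr 1
            exact Finset.prod_congr rfl fun u hu => by
              rw [Function.update_of_ne (Finset.ne_of_mem_erase hu)]
          have h2 : ∏ u, (κ u).factorial
              = (κ t).factorial * ∏ u ∈ Finset.univ.erase t, (κ u).factorial :=
            (Finset.mul_prod_erase _ _ (Finset.mem_univ t)).symm
          have h3 : (κ t).factorial = κ t * (κ t - 1).factorial := by
            obtain ⟨j, hj⟩ : ∃ j, κ t = j + 1 := ⟨κ t - 1, by omega⟩
            rw [hj]; simp [Nat.factorial_succ]
          rw [h2, h1, h3]; ring
        have hbij : ((Finset.univ.filter fun σ : Fin (s+1) → Fin r => ∀ t, cnt σ t = κ t).filter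
              fun σ => σ (Fin.last s) = t).card
            = (Finset.univ.filter fun σ' : Fin s → Fin r =>
                ∀ u, cnt σ' u = Function.update κ t (κ t - 1) u).card := by
          refine Finset.card_bij' (fun σ _ => fun a => σ (Fin.castSucc a))
            (fun σ' _ => Fin.snoc σ' t) ?_ ?_ ?_ ?_
          · intro σ hσ
            obtain ⟨hσA, hlast⟩ := Finset.mem_filter.mp hσ
            have hcnt : ∀ u, cnt σ u = κ u := (Finset.mem_filter.mp hσA).2
            have hself : Fin.snoc (fun a => σ (Fin.castSucc a)) t = σ := by
              rw [← hlast]; exact Fin.snoc_init_self σ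
            simp only [Finset.mem_filter, Finset.mem_univ, true_and]
            intro u
            have h5 := hsnoc (fun a => σ (Fin.castSucc a)) t u
            rw [hself, hcnt u] at h5
            rcases eq_or_ne u t with rfl | hne
            · rw [Function.update_self]
              simp at h5; omega
            · rw [Function.update_of_ne hne]
              rw [if_neg (Ne.symm hne)] at h5; omega
          · intro σ' hσ'
            have hcnt : ∀ u, cnt σ' u = Function.update κ t (κ t - 1) u :=
              (Finset.mem_filter.mp hσ').2
            simp only [Finset.mem_filter, Finset.mem_univ, true_and]
            refine ⟨fun u => ?_, by simp⟩
            rw [hsnoc σ' t u, hcnt u]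
            rcases eq_or_ne u t with rfl | hne
            · rw [Function.update_self]; simp; omega
            · rw [Function.update_of_ne hne, if_neg (Ne.symm hne)]; omega
          · intro σ hσ
            show Fin.snoc (fun a => σ (Fin.castSucc a)) t = σ
            rw [← (Finset.mem_filter.mp hσ).2]
            exact Fin.snoc_init_self σ
          · intro σ' _
            funext a
            simp
        rw [hbij, hprod, ← mul_assoc, mul_comm _ (κ t), mul_assoc,
          ih (Function.update κ t (κ t - 1)) hsum', mul_comm]
    have hcard : (Finset.univ.filter fun σ : Fin (s+1) → Fin r => ∀ t, cnt σ t = κ t).card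
        = ∑ t : Fin r, ((Finset.univ.filter fun σ : Fin (s+1) → Fin r => ∀ t, cnt σ t = κ t).filter
            fun σ => σ (Fin.last s) = t).card :=
      Finset.card_eq_sum_card_fiberwise (fun σ _ => Finset.mem_univ _)
    rw [hcard, Finset.sum_mul]
    have h6 : ∑ t : Fin r, ((Finset.univ.filter fun σ : Fin (s+1) → Fin r => ∀ t, cnt σ t = κ t).filter
          fun σ => σ (Fin.last s) = t).card * ∏ u, (κ u).factorial
        = ∑ t : Fin r, s.factorial * κ t := Finset.sum_congr rfl fun t _ => hterm t
    rw [h6, ← Finset.mul_sum, hκ, Nat.factorial_succ]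
    ring


lemma betaFn_eq (m : ℕ) (Adj : Fin m → Fin m → Prop) [DecidableRel Adj]
    (s : ℕ) (y : Fin m → ZMod 2) (c : Fin m → ℝ) :
    betaFn m Adj s y c
      = ∑ π ∈ Finset.univ.filter (fun π : Fin s → Fin m =>
          ∀ i, ((cnt π i : ZMod 2) = y i)),
        (∏ i, c i ^ cnt π i) * sgn Adj π := by
  classical
  unfold betaFn
  simp_rw [Finset.mul_sum]
  rw [← sum_mu (P := fun μ : Fin m → ℕ => ∀ i, ((μ i : ZMod 2) = y i))
    (f := fun π => (∏ i, c i ^ cnt π i) * sgn Adj π)]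
  refine Finset.sum_congr rfl fun μ hμ => Finset.sum_congr rfl fun π hπ => ?_
  have h : ∀ i, cnt π i = μ i := by
    simpa [cnt] using (Finset.mem_filter.mp hπ).2
  unfold sgn
  congr 1
  exact Finset.prod_congr rfl fun i _ => by rw [h i]

lemma betaOn_eq (m : ℕ) (Adj : Fin m → Fin m → Prop) [DecidableRel Adj]
    (S : Finset (Fin m)) (k : ℕ) (y : Fin m → ZMod 2) (c : Fin m → ℝ) :
    betaOn m Adj S k y c
      = ∑ π ∈ Finset.univ.filter (fun π : Fin k → Fin m =>
          (∀ a, π a ∈ S) ∧ ∀ i ∈ S, ((cnt π i : ZMod 2) = y i)),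
        (∏ i, c i ^ cnt π i) * sgn Adj π := by
  classical
  have h1 : betaOn m Adj S k y c
      = ∑ π ∈ Finset.univ.filter (fun π : Fin k → Fin m =>
          (∀ i ∈ S, ((cnt π i : ZMod 2) = y i)) ∧ ∀ i ∉ S, cnt π i = 0),
        (∏ i, c i ^ cnt π i) * sgn Adj π := by
    unfold betaOn
    simp_rw [Finset.mul_sum]
    rw [← sum_mu (P := fun μ : Fin m → ℕ =>
        (∀ i ∈ S, ((μ i : ZMod 2) = y i)) ∧ ∀ i ∉ S, μ i = 0)
      (f := fun π => (∏ i, c i ^ cnt π i) * sgn Adj π)]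
    refine Finset.sum_congr rfl fun μ hμ => Finset.sum_congr rfl fun π hπ => ?_
    have h : ∀ i, cnt π i = μ i := by
      simpa [cnt] using (Finset.mem_filter.mp hπ).2
    unfold sgn
    congr 1
    exact Finset.prod_congr rfl fun i _ => by rw [h i]
  rw [h1]
  refine Finset.sum_congr ?_ fun _ _ => rfl
  ext π
  simp only [Finset.mem_filter, Finset.mem_univ, true_and]
  have hiff : ∀ i : Fin m, cnt π i = 0 ↔ ∀ a, π a ≠ i := by
    intro i
    simp [cnt, Finset.card_eq_zero, Finset.filter_eq_empty_iff]
  constructor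
  · rintro ⟨h1, h2⟩
    refine ⟨fun a => ?_, h1⟩
    by_contra hc
    exact ((hiff (π a)).mp (h2 (π a) hc)) a rfl
  · rintro ⟨h1, h2⟩
    exact ⟨h2, fun i hi => (hiff i).mpr fun a hc => hi (hc ▸ h1 a)⟩

lemma fixed_sigma (m r : ℕ) (Adj : Fin m → Fin m → Prop) [DecidableRel Adj]
    (V : Fin r → Finset (Fin m))
    (hdisj : ∀ t t', t ≠ t' → Disjoint (V t) (V t'))
    (hcover : Finset.univ.biUnion V = Finset.univ)
    (hsep : ∀ t t', t ≠ t' → ∀ i ∈ V t, ∀ j ∈ V t', ¬Adj i j)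
    (s : ℕ) (y : Fin m → ZMod 2) (c : Fin m → ℝ) (σ : Fin s → Fin r) :
    ∑ π ∈ Finset.univ.filter (fun π : Fin s → Fin m =>
        (∀ i, ((cnt π i : ZMod 2) = y i)) ∧ ∀ a, π a ∈ V (σ a)),
      (∏ i, c i ^ cnt π i) * sgn Adj π
    = ∏ t, betaOn m Adj (V t) (cnt σ t) y c := by
  classical
  have hV : ∀ {a : Fin m} {t t' : Fin r}, a ∈ V t → a ∈ V t' → t = t' := by
    intro a t t' h h'
    by_contra hne
    exact Finset.disjoint_left.mp (hdisj t t' hne) h h'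
  simp_rw [betaOn_eq]
  rw [Finset.prod_univ_sum]
  have hFcard : ∀ t, (Finset.univ.filter fun a : Fin s => σ a = t).card = cnt σ t :=
    fun t => rfl
  set e : ∀ t, Fin (cnt σ t) ≃o {x // x ∈ Finset.univ.filter fun a : Fin s => σ a = t} :=
    fun t => (Finset.univ.filter fun a : Fin s => σ a = t).orderIsoOfFin (hFcard t) with he
  have hmemF : ∀ {a : Fin s} {t : Fin r}, σ a = t →
      a ∈ Finset.univ.filter fun a : Fin s => σ a = t := by
    intro a t h; simp [h]
  have hσe : ∀ (t : Fin r) (b : Fin (cnt σ t)), σ ((e t b : Fin s)) = t := by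
    intro t b
    simpa using (Finset.mem_filter.mp (e t b).2).2
  have hcoe : ∀ (t : Fin r) (b : Fin (cnt σ t)) (h : (e t b : Fin s) ∈ _),
      (e t).symm ⟨(e t b : Fin s), h⟩ = b := by
    intro t b h
    rw [show (⟨(e t b : Fin s), h⟩ : {x // x ∈ _}) = e t b from Subtype.ext rfl]
    exact (e t).symm_apply_apply b
  -- count transfer
  have hcnt : ∀ (π : Fin s → Fin m), (∀ a, π a ∈ V (σ a)) → ∀ (t : Fin r), ∀ i ∈ V t,
      cnt (fun b => π ((e t b : Fin s))) i = cnt π i := by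
    intro π hπ t i hi
    have hFa : ∀ a ∈ Finset.univ.filter (fun a => π a = i),
        a ∈ Finset.univ.filter fun a : Fin s => σ a = t := by
      intro a ha
      have h1 : π a = i := by simpa using (Finset.mem_filter.mp ha).2
      exact hmemF (hV (hπ a) (h1 ▸ hi))
    unfold cnt
    refine Finset.card_bij' (fun b _ => ((e t b : Fin s)))
      (fun a ha => (e t).symm ⟨a, hFa a ha⟩) ?_ ?_ ?_ ?_
    · intro b hb
      exact Finset.mem_filter.mpr ⟨Finset.mem_univ _, (Finset.mem_filter.mp hb).2⟩
    · intro a ha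
      have h1 : π a = i := by simpa using (Finset.mem_filter.mp ha).2
      simp only [Finset.mem_filter, Finset.mem_univ, true_and]
      exact Finset.mem_filter.mpr ⟨Finset.mem_univ _, (congrArg (fun z : {x // x ∈ Finset.univ.filter fun a : Fin s => σ a = t} => π ↑z)
        ((e t).apply_symm_apply ⟨a, hFa a ha⟩)).trans h1⟩
    · intro b hb
      exact hcoe t b _
    · intro a ha
      exact congrArg Subtype.val ((e t).apply_symm_apply ⟨a, hFa a ha⟩)
  -- zero counts outside the block
  have hval : ∀ (π : Fin s → Fin m), (∀ a, π a ∈ V (σ a)) → ∀ (t : Fin r) (b : Fin (cnt σ t)),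
      π ((e t b : Fin s)) ∈ V t := by
    intro π hπ t b
    have h1 := hπ ((e t b : Fin s))
    rwa [hσe t b] at h1
  have hzero : ∀ (π : Fin s → Fin m), (∀ a, π a ∈ V (σ a)) → ∀ (t : Fin r), ∀ i ∉ V t,
      cnt (fun b => π ((e t b : Fin s))) i = 0 := by
    intro π hπ t i hi
    unfold cnt
    rw [Finset.card_eq_zero, Finset.filter_eq_empty_iff]
    intro b _ hc
    exact hi (hc ▸ hval π hπ t b)
  -- weight factorization
  have hwt : ∀ (π : Fin s → Fin m), (∀ a, π a ∈ V (σ a)) →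
      (∏ i, c i ^ cnt π i) = ∏ t, ∏ i, c i ^ cnt (fun b => π ((e t b : Fin s))) i := by
    intro π hπ
    have h1 : ∀ t : Fin r, (∏ i, c i ^ cnt (fun b => π ((e t b : Fin s))) i)
        = ∏ i ∈ V t, c i ^ cnt π i := by
      intro t
      rw [← Finset.prod_subset (Finset.subset_univ (V t))
        (fun i _ hi => by rw [hzero π hπ t i hi, pow_zero])]
      exact Finset.prod_congr rfl fun i hi => by rw [hcnt π hπ t i hi]
    simp_rw [h1]
    rw [← Finset.prod_biUnion, hcover]
    intro t _ t' _ hne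
    exact hdisj t t' hne
  -- sign factorization
  have hsgn : ∀ (π : Fin s → Fin m), (∀ a, π a ∈ V (σ a)) →
      sgn Adj π = ∏ t, sgn Adj (fun b => π ((e t b : Fin s))) := by
    intro π hπ
    unfold sgn
    rw [Finset.prod_pow_eq_pow_sum]
    congr 1
    rw [Finset.card_eq_sum_card_fiberwise
      (f := fun p : Fin s × Fin s => σ p.1) (t := Finset.univ) (fun _ _ => Finset.mem_univ _)]
    refine Finset.sum_congr rfl fun t _ => ?_
    have hpmem : ∀ p ∈ (Finset.univ.filter fun p : Fin s × Fin s =>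
          p.1 < p.2 ∧ π p.2 < π p.1 ∧ Adj (π p.1) (π p.2)).filter (fun p => σ p.1 = t),
        (p.1 ∈ Finset.univ.filter fun a : Fin s => σ a = t)
          ∧ (p.2 ∈ Finset.univ.filter fun a : Fin s => σ a = t) := by
      intro p hp
      obtain ⟨hp1, hp2⟩ := Finset.mem_filter.mp hp
      have hinv := (Finset.mem_filter.mp hp1).2
      have hσ12 : σ p.1 = σ p.2 := by
        by_contra hne
        exact hsep (σ p.1) (σ p.2) hne (π p.1) (hπ p.1) (π p.2) (hπ p.2) hinv.2.2
      exact ⟨hmemF hp2, hmemF (hσ12 ▸ hp2)⟩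
    refine (Finset.card_bij'
      (fun q (_ : q ∈ Finset.univ.filter fun q : Fin (cnt σ t) × Fin (cnt σ t) =>
          q.1 < q.2 ∧ π ((e t q.2 : Fin s)) < π ((e t q.1 : Fin s))
            ∧ Adj (π ((e t q.1 : Fin s))) (π ((e t q.2 : Fin s)))) =>
        (((e t q.1 : Fin s)), ((e t q.2 : Fin s))))
      (fun p hp => ((e t).symm ⟨p.1, (hpmem p hp).1⟩, (e t).symm ⟨p.2, (hpmem p hp).2⟩))
      ?_ ?_ ?_ ?_).symm
    · intro q hq
      obtain ⟨h1, h2, h3⟩ : q.1 < q.2 ∧ π ((e t q.2 : Fin s)) < π ((e t q.1 : Fin s))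
          ∧ Adj (π ((e t q.1 : Fin s))) (π ((e t q.2 : Fin s))) := by simpa using hq
      simp only [Finset.mem_filter, Finset.mem_univ, true_and]
      refine ⟨⟨?_, h2, h3⟩, hσe t q.1⟩
      exact Subtype.coe_lt_coe.mpr ((e t).lt_iff_lt.mpr h1)
    · intro p hp
      obtain ⟨hp1, _⟩ := Finset.mem_filter.mp hp
      obtain ⟨h1, h2, h3⟩ := (Finset.mem_filter.mp hp1).2
      simp only [Finset.mem_filter, Finset.mem_univ, true_and]
      have e1 : ((e t ((e t).symm ⟨p.1, (hpmem p hp).1⟩) : Fin s)) = p.1 :=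
        congrArg Subtype.val ((e t).apply_symm_apply ⟨p.1, (hpmem p hp).1⟩)
      have e2 : ((e t ((e t).symm ⟨p.2, (hpmem p hp).2⟩) : Fin s)) = p.2 :=
        congrArg Subtype.val ((e t).apply_symm_apply ⟨p.2, (hpmem p hp).2⟩)
      refine ⟨?_, ?_, ?_⟩
      · exact ((e t).symm.lt_iff_lt).mpr (Subtype.mk_lt_mk.mpr h1)
      · rw [e1, e2]; exact h2
      · rw [e1, e2]; exact h3
    · intro q hq
      have key : ∀ (h1 : ((e t q.1 : Fin s)) ∈ Finset.univ.filter fun a : Fin s => σ a = t)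
          (h2 : ((e t q.2 : Fin s)) ∈ Finset.univ.filter fun a : Fin s => σ a = t),
          (((e t).symm ⟨(e t q.1 : Fin s), h1⟩, (e t).symm ⟨(e t q.2 : Fin s), h2⟩)
            : Fin (cnt σ t) × Fin (cnt σ t)) = q :=
        fun h1 h2 => Prod.ext (hcoe t q.1 h1) (hcoe t q.2 h2)
      exact key _ _
    · intro p hp
      exact Prod.ext
        (congrArg Subtype.val ((e t).apply_symm_apply ⟨p.1, (hpmem p hp).1⟩))
        (congrArg Subtype.val ((e t).apply_symm_apply ⟨p.2, (hpmem p hp).2⟩))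
  -- transfer along the canonical bijection
  have hex : ∀ i : Fin m, ∃ t, i ∈ V t := by
    intro i
    have h1 : i ∈ Finset.univ.biUnion V := hcover.symm ▸ Finset.mem_univ i
    rcases Finset.mem_biUnion.mp h1 with ⟨t, _, ht⟩
    exact ⟨t, ht⟩
  have K8 : ∀ (p : ∀ t, Fin (cnt σ t) → Fin m) (t : Fin r) (b : Fin (cnt σ t)),
      (fun a => p (σ a) ((e (σ a)).symm ⟨a, hmemF rfl⟩)) ((e t b : Fin s)) = p t b := by
    intro p t b
    have key : ∀ (t' : Fin r) (a : Fin s) (h : σ a = t'),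
        p (σ a) ((e (σ a)).symm ⟨a, hmemF rfl⟩) = p t' ((e t').symm ⟨a, hmemF h⟩) := by
      intro t' a h
      subst h
      rfl
    exact (key t _ (hσe t b)).trans (congrArg (p t) (hcoe t b _))
  refine Finset.sum_bij'
    (fun π _ => fun t (b : Fin (cnt σ t)) => π ((e t b : Fin s)))
    (fun p _ => fun a => p (σ a) ((e (σ a)).symm ⟨a, hmemF rfl⟩))
    ?_ ?_ ?_ ?_ ?_
  · intro π hπ'
    obtain ⟨hπ1, hπ2⟩ : (∀ i, ((cnt π i : ZMod 2) = y i)) ∧ ∀ a, π a ∈ V (σ a) := by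
      simpa using hπ'
    rw [Fintype.mem_piFinset]
    intro t
    simp only [Finset.mem_filter, Finset.mem_univ, true_and]
    exact ⟨fun b => hval π hπ2 t b, fun i hi' => by rw [hcnt π hπ2 t i hi']; exact hπ1 i⟩
  · intro p hp
    have hp' : ∀ t, (∀ b, p t b ∈ V t) ∧ ∀ i ∈ V t, ((cnt (p t) i : ZMod 2) = y i) := by
      intro t
      have := Fintype.mem_piFinset.mp hp t
      simpa using this
    have hjV : ∀ a : Fin s, p (σ a) ((e (σ a)).symm ⟨a, hmemF rfl⟩) ∈ V (σ a) :=
      fun a => (hp' (σ a)).1 _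
    simp only [Finset.mem_filter, Finset.mem_univ, true_and]
    refine ⟨fun i => ?_, hjV⟩
    obtain ⟨t, hit⟩ := hex i
    have h2 : cnt (fun b => (fun a => p (σ a) ((e (σ a)).symm ⟨a, hmemF rfl⟩))
        ((e t b : Fin s))) i = cnt (fun a => p (σ a) ((e (σ a)).symm ⟨a, hmemF rfl⟩)) i :=
      hcnt _ hjV t i hit
    have h3 : (fun b => (fun a => p (σ a) ((e (σ a)).symm ⟨a, hmemF rfl⟩))
        ((e t b : Fin s))) = p t := funext fun b => K8 p t b
    rw [← h2, h3]
    exact (hp' t).2 i hit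
  · intro π hπ'
    funext a
    exact congrArg (fun z : {x // x ∈ Finset.univ.filter fun x : Fin s => σ x = σ a} => π ↑z)
      ((e (σ a)).apply_symm_apply ⟨a, hmemF rfl⟩)
  · intro p hp
    funext t b
    exact K8 p t b
  · intro π hπ'
    obtain ⟨hπ1, hπ2⟩ : (∀ i, ((cnt π i : ZMod 2) = y i)) ∧ ∀ a, π a ∈ V (σ a) := by
      simpa using hπ'
    rw [Finset.prod_mul_distrib, ← hwt π hπ2, ← hsgn π hπ2]

/-- factorization of the weighted β-function over a partition of the
vertex set into blocks not joined by any edge. -/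
theorem stmt_14 (m r : ℕ) (Adj : Fin m → Fin m → Prop) [DecidableRel Adj]
    (hsymm : ∀ i j, Adj i j → Adj j i)
    (hirr : ∀ i, ¬Adj i i)
    (V : Fin r → Finset (Fin m))
    (hdisj : ∀ t t', t ≠ t' → Disjoint (V t) (V t'))
    (hcover : Finset.univ.biUnion V = Finset.univ)
    (hsep : ∀ t t', t ≠ t' → ∀ i ∈ V t, ∀ j ∈ V t', ¬Adj i j)
    (s : ℕ) (y : Fin m → ZMod 2) (c : Fin m → ℝ) :
    betaFn m Adj s y c =
      ∑ κ ∈ (Fintype.piFinset fun _ : Fin r => Finset.range (s + 1)).filter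
          (fun κ : Fin r → ℕ => (∑ t, κ t) = s),
        ((s.factorial : ℝ) / ∏ t, ((κ t).factorial : ℝ)) *
          ∏ t, betaOn m Adj (V t) (κ t) y c := by
  classical
  have hex : ∀ i : Fin m, ∃ t, i ∈ V t := by
    intro i
    have h1 : i ∈ Finset.univ.biUnion V := hcover.symm ▸ Finset.mem_univ i
    rcases Finset.mem_biUnion.mp h1 with ⟨t, _, ht⟩
    exact ⟨t, ht⟩
  choose blk hblk using hex
  have hV : ∀ {a : Fin m} {t t' : Fin r}, a ∈ V t → a ∈ V t' → t = t' := by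
    intro a t t' h h'
    by_contra hne
    exact Finset.disjoint_left.mp (hdisj t t' hne) h h'
  rw [betaFn_eq]
  rw [← Finset.sum_fiberwise (Finset.univ.filter (fun π : Fin s → Fin m =>
      ∀ i, ((cnt π i : ZMod 2) = y i))) (fun π : Fin s → Fin m => blk ∘ π)
    (fun π => (∏ i, c i ^ cnt π i) * sgn Adj π)]
  have hstep1 : ∀ σ : Fin s → Fin r,
      ∑ π ∈ (Finset.univ.filter (fun π : Fin s → Fin m =>
          ∀ i, ((cnt π i : ZMod 2) = y i))).filter (fun π => blk ∘ π = σ),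
        (∏ i, c i ^ cnt π i) * sgn Adj π
      = ∏ t, betaOn m Adj (V t) (cnt σ t) y c := by
    intro σ
    rw [← fixed_sigma m r Adj V hdisj hcover hsep s y c σ]
    refine Finset.sum_congr ?_ fun _ _ => rfl
    ext π
    simp only [Finset.mem_filter, Finset.mem_univ, true_and, Finset.filter_filter]
    constructor
    · rintro ⟨h1, h2⟩
      refine ⟨h1, fun a => ?_⟩
      have h3 : blk (π a) = σ a := congrFun h2 a
      exact h3 ▸ hblk (π a)
    · rintro ⟨h1, h2⟩
      exact ⟨h1, funext fun a => hV (hblk (π a)) (h2 a)⟩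
  calc ∑ σ : Fin s → Fin r,
        ∑ π ∈ (Finset.univ.filter (fun π : Fin s → Fin m =>
            ∀ i, ((cnt π i : ZMod 2) = y i))).filter (fun π => blk ∘ π = σ),
          (∏ i, c i ^ cnt π i) * sgn Adj π
      = ∑ σ : Fin s → Fin r, ∏ t, betaOn m Adj (V t) (cnt σ t) y c :=
        Finset.sum_congr rfl fun σ _ => hstep1 σ
    _ = ∑ κ ∈ (Fintype.piFinset fun _ : Fin r => Finset.range (s + 1)).filter
          (fun κ : Fin r → ℕ => (∑ t, κ t) = s),
        ∑ σ ∈ Finset.univ.filter (fun σ : Fin s → Fin r => cnt σ = κ),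
          ∏ t, betaOn m Adj (V t) (cnt σ t) y c := by
        refine (Finset.sum_fiberwise_of_maps_to ?_ _).symm
        intro σ _
        simp only [Finset.mem_filter, Fintype.mem_piFinset, Finset.mem_range]
        exact ⟨fun t => Nat.lt_succ_of_le (cnt_le σ t), cnt_sum σ⟩
    _ = ∑ κ ∈ (Fintype.piFinset fun _ : Fin r => Finset.range (s + 1)).filter
          (fun κ : Fin r → ℕ => (∑ t, κ t) = s),
        ((s.factorial : ℝ) / ∏ t, ((κ t).factorial : ℝ)) *
          ∏ t, betaOn m Adj (V t) (κ t) y c := by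
        refine Finset.sum_congr rfl fun κ hκ => ?_
        have hκs : ∑ t, κ t = s := (Finset.mem_filter.mp hκ).2
        have h1 : ∑ σ ∈ Finset.univ.filter (fun σ : Fin s → Fin r => cnt σ = κ),
            ∏ t, betaOn m Adj (V t) (cnt σ t) y c
            = ∑ σ ∈ Finset.univ.filter (fun σ : Fin s → Fin r => cnt σ = κ),
              ∏ t, betaOn m Adj (V t) (κ t) y c := by
          refine Finset.sum_congr rfl fun σ hσ => ?_
          have h2 : cnt σ = κ := (Finset.mem_filter.mp hσ).2
          rw [h2]
        rw [h1, Finset.sum_const, nsmul_eq_mul]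
        congr 1
        have hsets : (Finset.univ.filter (fun σ : Fin s → Fin r => cnt σ = κ))
            = Finset.univ.filter (fun σ : Fin s → Fin r => ∀ t, cnt σ t = κ t) := by
          apply Finset.filter_congr
          intro σ _
          simp [funext_iff]
        have hc := count_aux s κ hκs
        rw [hsets]
        have hne : (∏ t, ((κ t).factorial : ℝ)) ≠ 0 := by
          refine Finset.prod_ne_zero_iff.mpr fun t _ => ?_
          exact_mod_cast (κ t).factorial_ne_zero
        rw [eq_div_iff hne]
        exact_mod_cast hc
end

section
/- Let G be a graph on vertex set {1,…,m} and {1,…,m} = V₁ ⊔ ⋯ ⊔ V_r a partition such that no edge of G joins vertices in distinct blocks, with induced subgraphs G_t on V_t. Fix l ∈ ℕ, c ∈ ℝ^m, a₀,…,a_l ∈ ℝ, and y ∈ 𝔽₂^m. For each t, define the (l+1)×(l+1) real matrix A^{(t)}, indexed by {0,…,l}, with entries (A^{(t)})_{i,j} = C(j,i) · β_{G_t}^{(j−i)}( y|_{V_t}, c|_{V_t} ) if j ≥ i, and 0 otherwise, where C(j,i) is the binomial coefficient. Let e₀ ∈ ℝ^{l+1} be the first standard basis vector and a = (a₀, a₁,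 …, a_l)ᵀ. Then e₀ᵀ · A^{(1)} A^{(2)} ⋯ A^{(r)} · a = Σ_{s=0}^{l} a_s · β_G^{(s)}(y, c). -/
namespace Stmt15

open Finset

variable {m : ℕ} (Adj : Fin m → Fin m → Prop) [DecidableRel Adj]

/-- number of occurrences of `j` in the sequence `π` -/
def cnt {s : ℕ} (π : Fin s → Fin m) (j : Fin m) : ℕ :=
  (Finset.univ.filter fun a => π a = j).card

noncomputable def sgn (s : ℕ) (π : Fin s → Fin m) : ℝ :=
  ∏ p : Fin s × Fin s,
    if p.1 < p.2 ∧ π p.2 < π p.1 ∧ Adj (π p.1) (π p.2) then (-1 : ℝ) else 1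

noncomputable def TT (s : ℕ) (μ : Fin m → ℕ) : ℝ :=
  ∑ π ∈ (Finset.univ : Finset (Fin s → Fin m)).filter (fun π => ∀ i, cnt π i = μ i),
    sgn Adj s π

lemma sgn_eq (s : ℕ) (π : Fin s → Fin m) :
    (-1 : ℝ) ^ (Finset.univ.filter (fun p : Fin s × Fin s =>
        p.1 < p.2 ∧ π p.2 < π p.1 ∧ Adj (π p.1) (π p.2))).card = sgn Adj s π := by
  rw [sgn, ← Finset.prod_filter]
  simp [Finset.prod_const]

def EE (i : Fin m) (μ : Fin m → ℕ) : ℕ := ∑ j, if i < j ∧ Adj j i then μ j else 0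

def dec (μ : Fin m → ℕ) (i : Fin m) : Fin m → ℕ := fun j => if j = i then μ j - 1 else μ j

lemma sum_cnt {s : ℕ} (π : Fin s → Fin m) : ∑ j, cnt π j = s := by
  classical
  have := (Finset.card_eq_sum_card_fiberwise
    (f := π) (s := Finset.univ) (t := Finset.univ) (fun x _ => Finset.mem_univ _))
  simpa [cnt] using this.symm

lemma TT_eq_zero {s : ℕ} {μ : Fin m → ℕ} (h : (∑ i, μ i) ≠ s) : TT Adj s μ = 0 := by
  rw [TT]
  rw [Finset.filter_eq_empty_iff.mpr, Finset.sum_empty]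
  intro π _ hc
  apply h
  calc (∑ i, μ i) = ∑ i, cnt π i := by simp [hc]
  _ = s := sum_cnt π

lemma TT_zero : TT Adj 0 (fun _ => 0) = 1 := by
  classical
  rw [TT]
  rw [Finset.filter_true_of_mem (fun π _ => by intro i; simp [cnt])]
  rw [Finset.sum_congr rfl (fun π _ => show sgn Adj 0 π = 1 by simp [sgn])]
  simp


lemma cnt_snoc {s : ℕ} (π : Fin s → Fin m) (i j : Fin m) :
    cnt (Fin.snoc π i : Fin (s+1) → Fin m) j = cnt π j + if i = j then 1 else 0 := by
  classical
  simp only [cnt, Finset.card_filter]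
  rw [Fin.sum_univ_castSucc]
  simp [Fin.snoc_castSucc, Fin.snoc_last]

lemma sgn_snoc {s : ℕ} (π : Fin s → Fin m) (i : Fin m) :
    sgn Adj (s+1) (Fin.snoc π i) = sgn Adj s π *
      ∏ a : Fin s, (if i < π a ∧ Adj (π a) i then (-1 : ℝ) else 1) := by
  rw [sgn, sgn, Fintype.prod_prod_type, Fintype.prod_prod_type, Fin.prod_univ_castSucc]
  have hlast : ∀ b : Fin (s+1), ¬ (Fin.last s < b) := fun b => Fin.not_lt.mpr (Fin.le_last b)
  have h2 : (∏ b : Fin (s+1),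
      if Fin.last s < b ∧ (Fin.snoc π i : Fin (s+1) → Fin m) b < (Fin.snoc π i : Fin (s+1) → Fin m) (Fin.last s) ∧
        Adj ((Fin.snoc π i : Fin (s+1) → Fin m) (Fin.last s)) ((Fin.snoc π i : Fin (s+1) → Fin m) b)
      then (-1:ℝ) else 1) = 1 := by
    apply Finset.prod_eq_one
    intro b _
    rw [if_neg]
    intro hb
    exact hlast b hb.1
  rw [h2, mul_one]
  have h1 : ∀ a' : Fin s, (∏ b : Fin (s+1),
      if Fin.castSucc a' < b ∧ (Fin.snoc π i : Fin (s+1) → Fin m) b < (Fin.snoc π i : Fin (s+1) → Fin m) (Fin.castSucc a') ∧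
        Adj ((Fin.snoc π i : Fin (s+1) → Fin m) (Fin.castSucc a')) ((Fin.snoc π i : Fin (s+1) → Fin m) b)
      then (-1:ℝ) else 1)
      = (∏ b : Fin s, if a' < b ∧ π b < π a' ∧ Adj (π a') (π b) then (-1:ℝ) else 1) *
        (if i < π a' ∧ Adj (π a') i then (-1:ℝ) else 1) := by
    intro a'
    rw [Fin.prod_univ_castSucc]
    simp [Fin.snoc_castSucc, Fin.snoc_last, Fin.castSucc_lt_castSucc_iff, Fin.castSucc_lt_last]
  rw [Finset.prod_congr rfl (fun a' _ => h1 a'), Finset.prod_mul_distrib]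

lemma prod_g {s : ℕ} (π : Fin s → Fin m) (ν : Fin m → ℕ) (h : ∀ j, cnt π j = ν j) (i : Fin m) :
    (∏ a : Fin s, (if i < π a ∧ Adj (π a) i then (-1 : ℝ) else 1)) = (-1 : ℝ) ^ (EE Adj i ν) := by
  classical
  have := Finset.prod_fiberwise' (Finset.univ : Finset (Fin s)) π
    (fun j => if i < j ∧ Adj j i then (-1 : ℝ) else 1)
  rw [← this]
  have h1 : ∀ j : Fin m, (∏ _a ∈ Finset.univ.filter (fun a => π a = j),
      (if i < j ∧ Adj j i then (-1:ℝ) else 1)) = (if i < j ∧ Adj j i then (-1:ℝ) else 1) ^ (ν j) := by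
    intro j
    rw [Finset.prod_const, ← h j]
    rfl
  rw [Finset.prod_congr rfl (fun j _ => h1 j), EE, ← Finset.prod_pow_eq_pow_sum]
  apply Finset.prod_congr rfl
  intro j _
  by_cases hc : i < j ∧ Adj j i <;> simp [hc]


lemma content_snoc_iff {s : ℕ} (π : Fin s → Fin m) (i : Fin m) (μ : Fin m → ℕ) :
    (∀ j, cnt (Fin.snoc π i : Fin (s+1) → Fin m) j = μ j) ↔
      (0 < μ i ∧ ∀ j, cnt π j = dec μ i j) := by
  constructor
  · intro h
    have hi := h i
    rw [cnt_snoc, if_pos rfl] at hi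
    refine ⟨by omega, fun j => ?_⟩
    by_cases hj : j = i
    · subst hj; rw [dec, if_pos rfl]; omega
    · have := h j
      rw [cnt_snoc, if_neg (fun he => hj he.symm)] at this
      rw [dec, if_neg hj]; omega
  · rintro ⟨hpos, h⟩ j
    rw [cnt_snoc, h j]
    by_cases hj : j = i
    · subst hj; rw [dec, if_pos rfl, if_pos rfl]; omega
    · rw [dec, if_neg hj, if_neg (fun he => hj he.symm)]; omega

lemma EE_dec (i : Fin m) (μ : Fin m → ℕ) : EE Adj i (dec μ i) = EE Adj i μ := by
  apply Finset.sum_congr rfl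
  intro j _
  by_cases hc : i < j ∧ Adj j i
  · rw [if_pos hc, if_pos hc, dec, if_neg (fun he => absurd hc.1 (by rw [he]; exact lt_irrefl i))]
  · rw [if_neg hc, if_neg hc]

lemma TT_succ (s : ℕ) (μ : Fin m → ℕ) :
    TT Adj (s+1) μ = ∑ i ∈ Finset.univ.filter (fun i => 0 < μ i),
      (-1 : ℝ) ^ (EE Adj i μ) * TT Adj s (dec μ i) := by
  classical
  rw [TT, Finset.sum_filter]
  rw [← Fintype.sum_equiv
    ({ toFun := fun p => Fin.snoc p.2 p.1
       invFun := fun π => (π (Fin.last s), Fin.init π)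
       left_inv := fun p => by simp [Fin.init_snoc, Fin.snoc_last]
       right_inv := fun π => by simp [Fin.snoc_init_self] } :
      (Fin m × (Fin s → Fin m)) ≃ (Fin (s+1) → Fin m))
    (fun p => if (∀ j, cnt (Fin.snoc p.2 p.1 : Fin (s+1) → Fin m) j = μ j)
      then sgn Adj (s+1) (Fin.snoc p.2 p.1) else 0)
    (fun π => if (∀ j, cnt π j = μ j) then sgn Adj (s+1) π else 0)
    (fun p => rfl)]
  rw [Fintype.sum_prod_type]
  have key : ∀ i : Fin m,
      (∑ π : Fin s → Fin m, if (∀ j, cnt (Fin.snoc π i : Fin (s+1) → Fin m) j = μ j)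
        then sgn Adj (s+1) (Fin.snoc π i) else 0)
      = if 0 < μ i then (-1 : ℝ) ^ (EE Adj i μ) * TT Adj s (dec μ i) else 0 := by
    intro i
    by_cases hpos : 0 < μ i
    · rw [if_pos hpos, TT, Finset.sum_filter, Finset.mul_sum]
      apply Finset.sum_congr rfl
      intro π _
      by_cases hc : ∀ j, cnt π j = dec μ i j
      · rw [if_pos ((content_snoc_iff π i μ).mpr ⟨hpos, hc⟩), if_pos hc,
          sgn_snoc, prod_g Adj π (dec μ i) hc i, EE_dec]
        ring
      · rw [if_neg (fun h => hc ((content_snoc_iff π i μ).mp h).2), if_neg hc, mul_zero]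
    · rw [if_neg hpos]
      apply Finset.sum_eq_zero
      intro π _
      rw [if_neg (fun h => hpos ((content_snoc_iff π i μ).mp h).1)]
  rw [Finset.sum_congr rfl (fun i _ => key i), Finset.sum_filter]


lemma dec_sum {μ : Fin m → ℕ} {i : Fin m} (h : 0 < μ i) :
    ∑ j, dec μ i j = (∑ j, μ j) - 1 := by
  classical
  have h2 := Finset.sum_erase_add Finset.univ μ (Finset.mem_univ i)
  have h3 := Finset.sum_erase_add Finset.univ (dec μ i) (Finset.mem_univ i)
  have h4 : ∑ x ∈ Finset.univ.erase i, dec μ i x = ∑ x ∈ Finset.univ.erase i, μ x :=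
    Finset.sum_congr rfl
      (fun j hj => show dec μ i j = μ j from if_neg (Finset.ne_of_mem_erase hj))
  have h5 : dec μ i i = μ i - 1 := if_pos rfl
  omega

lemma TT_conv (S T' : Finset (Fin m)) (hd : Disjoint S T')
    (hsep : ∀ i ∈ S, ∀ j ∈ T', ¬Adj i j ∧ ¬Adj j i) :
    ∀ (s : ℕ) (ν κ : Fin m → ℕ), (∀ i ∉ S, ν i = 0) → (∀ i ∉ T', κ i = 0) →
    (∑ i, ν i) + (∑ i, κ i) = s →
    TT Adj s (ν + κ) = (Nat.choose s (∑ i, ν i) : ℝ) *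
      (TT Adj (∑ i, ν i) ν * TT Adj (∑ i, κ i) κ) := by
  classical
  intro s
  induction s with
  | zero =>
    intro ν κ hν hκ hsum
    have hν0 : ν = fun _ => 0 := by
      funext j
      have := Finset.single_le_sum (f := ν) (fun j _ => Nat.zero_le _) (Finset.mem_univ j)
      omega
    have hκ0 : κ = fun _ => 0 := by
      funext j
      have := Finset.single_le_sum (f := κ) (fun j _ => Nat.zero_le _) (Finset.mem_univ j)
      omega
    subst hν0; subst hκ0
    have h1 : ((fun (_ : Fin m) => 0) + fun (_ : Fin m) => 0 : Fin m → ℕ) = fun _ => 0 := by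
      funext j; simp
    rw [h1]
    simp [TT_zero]
  | succ s ih =>
    intro ν κ hν hκ hsum
    by_cases hk : (∑ i, ν i) = 0
    · have hν0 : ν = fun _ => 0 := by
        funext j
        have := Finset.single_le_sum (f := ν) (fun j _ => Nat.zero_le _) (Finset.mem_univ j)
        omega
      subst hν0
      have h1 : ((fun (_ : Fin m) => 0) + κ : Fin m → ℕ) = κ := by funext j; simp
      have h2 : (∑ i, κ i) = s + 1 := by simpa using hsum
      rw [h1, hk, h2]
      simp [TT_zero]
    by_cases hl : (∑ i, κ i) = 0
    · have hκ0 : κ = fun _ => 0 := by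
        funext j
        have := Finset.single_le_sum (f := κ) (fun j _ => Nat.zero_le _) (Finset.mem_univ j)
        omega
      subst hκ0
      have h1 : (ν + (fun (_ : Fin m) => 0) : Fin m → ℕ) = ν := by funext j; simp
      have h2 : (∑ i, ν i) = s + 1 := by simpa using hsum
      rw [h1, hl, h2]
      simp [TT_zero]
    -- main case
    set k := ∑ i, ν i with hkdef
    set l' := ∑ i, κ i with hldef
    have hk1 : 1 ≤ k := Nat.one_le_iff_ne_zero.mpr hk
    have hl1 : 1 ≤ l' := Nat.one_le_iff_ne_zero.mpr hl
    rw [TT_succ]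
    have hfil : Finset.univ.filter (fun i => 0 < (ν + κ) i) =
        (Finset.univ.filter fun i => 0 < ν i) ∪ (Finset.univ.filter fun i => 0 < κ i) := by
      ext i
      simp only [Finset.mem_filter, Finset.mem_union, Finset.mem_univ, true_and, Pi.add_apply]
      omega
    have hdisf : Disjoint (Finset.univ.filter fun i => 0 < ν i)
        (Finset.univ.filter fun i => 0 < κ i) := by
      rw [Finset.disjoint_left]
      intro i h1 h2
      simp only [Finset.mem_filter, Finset.mem_univ, true_and] at h1 h2
      have hiS : i ∈ S := by by_contra h; exact absurd (hν i h) (by omega)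
      have hiT : i ∈ T' := by by_contra h; exact absurd (hκ i h) (by omega)
      exact (Finset.disjoint_left.mp hd hiS) hiT
    rw [hfil, Finset.sum_union hdisf]
    have key1 : ∀ i ∈ (Finset.univ.filter fun i => 0 < ν i),
        (-1:ℝ)^(EE Adj i (ν + κ)) * TT Adj s (dec (ν + κ) i)
        = ((Nat.choose s (k-1) : ℝ) * TT Adj l' κ) *
            ((-1:ℝ)^(EE Adj i ν) * TT Adj (k-1) (dec ν i)) := by
      intro i hi
      simp only [Finset.mem_filter, Finset.mem_univ, true_and] at hi
      have hiS : i ∈ S := by by_contra h; exact absurd (hν i h) (by omega)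
      have hiT : i ∉ T' := Finset.disjoint_left.mp hd hiS
      have hκi : κ i = 0 := hκ i hiT
      have hEE : EE Adj i (ν + κ) = EE Adj i ν := by
        unfold EE
        apply Finset.sum_congr rfl
        intro j _
        by_cases hc : i < j ∧ Adj j i
        · rw [if_pos hc, if_pos hc, Pi.add_apply]
          have hκj : κ j = 0 := by
            by_contra hcon
            have hjT : j ∈ T' := by by_contra h2; exact hcon (hκ j h2)
            exact (hsep i hiS j hjT).2 hc.2
          omega
        · rw [if_neg hc, if_neg hc]
      have hdec : dec (ν + κ) i = dec ν i + κ := by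
        funext j
        by_cases hj : j = i
        · subst hj; simp [dec, hκi]
        · simp [dec, hj]
      have hsupdec : ∀ j ∉ S, dec ν i j = 0 := by
        intro j hj
        have := hν j hj
        simp [dec, this]
      have hds : ∑ j, dec ν i j = k - 1 := dec_sum hi
      have hih := ih (dec ν i) κ hsupdec hκ (by rw [hds]; omega)
      rw [hds] at hih
      rw [hEE, hdec, hih]
      ring
    have key2 : ∀ i ∈ (Finset.univ.filter fun i => 0 < κ i),
        (-1:ℝ)^(EE Adj i (ν + κ)) * TT Adj s (dec (ν + κ) i)
        = ((Nat.choose s k : ℝ) * TT Adj k ν) *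
            ((-1:ℝ)^(EE Adj i κ) * TT Adj (l'-1) (dec κ i)) := by
      intro i hi
      simp only [Finset.mem_filter, Finset.mem_univ, true_and] at hi
      have hiT : i ∈ T' := by by_contra h; exact absurd (hκ i h) (by omega)
      have hiS : i ∉ S := fun h => (Finset.disjoint_left.mp hd h) hiT
      have hνi : ν i = 0 := hν i hiS
      have hEE : EE Adj i (ν + κ) = EE Adj i κ := by
        unfold EE
        apply Finset.sum_congr rfl
        intro j _
        by_cases hc : i < j ∧ Adj j i
        · rw [if_pos hc, if_pos hc, Pi.add_apply]
          have hνj : ν j = 0 := by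
            by_contra hcon
            have hjS : j ∈ S := by by_contra h2; exact hcon (hν j h2)
            exact (hsep j hjS i hiT).1 hc.2
          omega
        · rw [if_neg hc, if_neg hc]
      have hdec : dec (ν + κ) i = ν + dec κ i := by
        funext j
        by_cases hj : j = i
        · subst hj; simp [dec, hνi]
        · simp [dec, hj]
      have hsupdec : ∀ j ∉ T', dec κ i j = 0 := by
        intro j hj
        have := hκ j hj
        simp [dec, this]
      have hds : ∑ j, dec κ i j = l' - 1 := dec_sum hi
      have hih := ih ν (dec κ i) hν hsupdec (by rw [hds]; omega)
      rw [hds] at hih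
      rw [hEE, hdec, hih]
      ring
    rw [Finset.sum_congr rfl key1, Finset.sum_congr rfl key2, ← Finset.mul_sum, ← Finset.mul_sum]
    have hTk : TT Adj k ν = ∑ i ∈ (Finset.univ.filter fun i => 0 < ν i),
        (-1:ℝ)^(EE Adj i ν) * TT Adj (k-1) (dec ν i) := by
      have h1 : k - 1 + 1 = k := by omega
      have h2 := TT_succ Adj (k-1) ν
      rw [h1] at h2
      exact h2
    have hTl : TT Adj l' κ = ∑ i ∈ (Finset.univ.filter fun i => 0 < κ i),
        (-1:ℝ)^(EE Adj i κ) * TT Adj (l'-1) (dec κ i) := by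
      have h1 : l' - 1 + 1 = l' := by omega
      have h2 := TT_succ Adj (l'-1) κ
      rw [h1] at h2
      exact h2
    rw [← hTk, ← hTl]
    have hch : (Nat.choose (s+1) k : ℝ) = (Nat.choose s (k-1) : ℝ) + (Nat.choose s k : ℝ) := by
      have h1 : k - 1 + 1 = k := by omega
      rw [← h1, Nat.choose_succ_succ]
      push_cast
      ring
    rw [hch]
    ring


def MM (S : Finset (Fin m)) (s : ℕ) (y : Fin m → ZMod 2) : Finset (Fin m → ℕ) :=
  (Fintype.piFinset fun _ : Fin m => Finset.range (s + 1)).filter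
    (fun μ => (∑ i, μ i) = s ∧ (∀ i ∈ S, ((μ i : ZMod 2)) = y i) ∧ ∀ i ∉ S, μ i = 0)

lemma betaOn_eq (S : Finset (Fin m)) (s : ℕ) (y : Fin m → ZMod 2) (c : Fin m → ℝ) :
    betaOn m Adj S s y c = ∑ μ ∈ MM S s y, (∏ i, c i ^ μ i) * TT Adj s μ := by
  apply Finset.sum_congr rfl
  intro μ _
  congr 1
  exact Finset.sum_congr rfl (fun π _ => sgn_eq Adj s π)

lemma mem_MM {S : Finset (Fin m)} {s : ℕ} {y : Fin m → ZMod 2} {μ : Fin m → ℕ} :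
    μ ∈ MM S s y ↔
      ((∑ i, μ i) = s ∧ (∀ i ∈ S, ((μ i : ZMod 2)) = y i) ∧ ∀ i ∉ S, μ i = 0) := by
  rw [MM, Finset.mem_filter]
  constructor
  · rintro ⟨-, h⟩; exact h
  · intro h
    refine ⟨?_, h⟩
    rw [Fintype.mem_piFinset]
    intro i
    rw [Finset.mem_range]
    have := Finset.single_le_sum (f := μ) (fun j _ => Nat.zero_le _) (Finset.mem_univ i)
    omega

lemma restrict_add {S T' : Finset (Fin m)} (hd : Disjoint S T') {μ : Fin m → ℕ}
    (hsupp : ∀ i ∉ S ∪ T', μ i = 0) :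
    ((fun j => if j ∈ S then μ j else 0) + (fun j => if j ∈ T' then μ j else 0) : Fin m → ℕ)
      = μ := by
  funext j
  by_cases hjS : j ∈ S
  · have hjT : j ∉ T' := Finset.disjoint_left.mp hd hjS
    simp [hjS, hjT]
  · by_cases hjT : j ∈ T'
    · simp [hjS, hjT]
    · have := hsupp j (by simp [hjS, hjT])
      simp [hjS, hjT, this]

lemma betaOn_union (S T' : Finset (Fin m)) (hd : Disjoint S T')
    (hsep : ∀ i ∈ S, ∀ j ∈ T', ¬Adj i j ∧ ¬Adj j i) (s : ℕ) (y : Fin m → ZMod 2)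
    (c : Fin m → ℝ) :
    betaOn m Adj (S ∪ T') s y c =
      ∑ k ∈ Finset.range (s+1),
        (Nat.choose s k : ℝ) * betaOn m Adj S k y c * betaOn m Adj T' (s-k) y c := by
  classical
  have hrhs : ∀ k ∈ Finset.range (s+1),
      (Nat.choose s k : ℝ) * betaOn m Adj S k y c * betaOn m Adj T' (s-k) y c =
      ∑ p ∈ MM S k y ×ˢ MM T' (s-k) y,
        (Nat.choose s k : ℝ) * ((∏ i, c i ^ p.1 i) * TT Adj k p.1) *
          ((∏ i, c i ^ p.2 i) * TT Adj (s-k) p.2) := by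
    intro k _
    rw [betaOn_eq, betaOn_eq, mul_assoc, Finset.sum_mul_sum, Finset.mul_sum,
      Finset.sum_product]
    apply Finset.sum_congr rfl
    intro ν _
    rw [Finset.mul_sum]
    apply Finset.sum_congr rfl
    intro κ _
    ring
  rw [Finset.sum_congr rfl hrhs]
  rw [Finset.sum_sigma' (Finset.range (s+1)) (fun k => MM S k y ×ˢ MM T' (s-k) y)
    (fun k p => (Nat.choose s k : ℝ) * ((∏ i, c i ^ p.1 i) * TT Adj k p.1) *
      ((∏ i, c i ^ p.2 i) * TT Adj (s-k) p.2))]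
  rw [betaOn_eq]
  refine Finset.sum_nbij'
    (i := fun μ => (⟨∑ j, if j ∈ S then μ j else 0,
      (fun j => if j ∈ S then μ j else 0, fun j => if j ∈ T' then μ j else 0)⟩ :
      (k : ℕ) × ((Fin m → ℕ) × (Fin m → ℕ))))
    (j := fun x => x.2.1 + x.2.2) ?_ ?_ ?_ ?_ ?_
  · -- hi : maps into the sigma set
    intro μ hμ
    rw [mem_MM] at hμ
    obtain ⟨hsum, hpar, hsupp⟩ := hμ
    have hadd := restrict_add hd hsupp
    have hsum2 : (∑ j, if j ∈ S then μ j else 0) + (∑ j, if j ∈ T' then μ j else 0) = s := by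
      rw [← Finset.sum_add_distrib]
      calc (∑ j, ((if j ∈ S then μ j else 0) + (if j ∈ T' then μ j else 0)))
          = ∑ j, μ j := Finset.sum_congr rfl (fun j _ => congrFun hadd j)
        _ = s := hsum
    rw [Finset.mem_sigma, Finset.mem_range, Finset.mem_product, mem_MM, mem_MM]
    dsimp only
    refine ⟨by omega, ⟨rfl, ?_, ?_⟩, ?_, ?_, ?_⟩
    · intro i hi
      have : (if i ∈ S then μ i else 0) = μ i := by simp [hi]
      rw [this]
      exact hpar i (Finset.mem_union_left _ hi)
    · intro i hi
      simp [hi]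
    · omega
    · intro i hi
      have : (if i ∈ T' then μ i else 0) = μ i := by simp [hi]
      rw [this]
      exact hpar i (Finset.mem_union_right _ hi)
    · intro i hi
      simp [hi]
  · -- hj : inverse maps into MM (S ∪ T')
    rintro ⟨k, ν, κ⟩ hx
    rw [Finset.mem_sigma, Finset.mem_range, Finset.mem_product, mem_MM, mem_MM] at hx
    dsimp only at hx
    obtain ⟨hk, ⟨hνs, hνp, hνz⟩, hκs, hκp, hκz⟩ := hx
    dsimp only
    rw [mem_MM]
    refine ⟨?_, ?_, ?_⟩
    · simp only [Pi.add_apply]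
      rw [Finset.sum_add_distrib, hνs, hκs]
      omega
    · intro i hi
      rcases Finset.mem_union.mp hi with hiS | hiT
      · have hκi : κ i = 0 := hκz i (Finset.disjoint_left.mp hd hiS)
        have h1 : (ν + κ) i = ν i := by simp [hκi]
        rw [h1]
        exact hνp i hiS
      · have hνi : ν i = 0 := hνz i (fun h => (Finset.disjoint_left.mp hd h) hiT)
        have h1 : (ν + κ) i = κ i := by simp [hνi]
        rw [h1]
        exact hκp i hiT
    · intro i hi
      have h1 : i ∉ S := fun h => hi (Finset.mem_union_left _ h)
      have h2 : i ∉ T' := fun h => hi (Finset.mem_union_right _ h)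
      simp [hνz i h1, hκz i h2]
  · -- left inverse
    intro μ hμ
    rw [mem_MM] at hμ
    exact restrict_add hd hμ.2.2
  · -- right inverse
    rintro ⟨k, ν, κ⟩ hx
    rw [Finset.mem_sigma, Finset.mem_range, Finset.mem_product, mem_MM, mem_MM] at hx
    dsimp only at hx
    obtain ⟨hk, ⟨hνs, hνp, hνz⟩, hκs, hκp, hκz⟩ := hx
    dsimp only
    have e1 : (fun j => if j ∈ S then (ν + κ) j else 0) = ν := by
      funext j
      by_cases hjS : j ∈ S
      · have hjT : j ∉ T' := Finset.disjoint_left.mp hd hjS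
        simp [hjS, hκz j hjT]
      · simp [hjS, hνz j hjS]
    have e2 : (fun j => if j ∈ T' then (ν + κ) j else 0) = κ := by
      funext j
      by_cases hjT : j ∈ T'
      · have hjS : j ∉ S := fun h => (Finset.disjoint_left.mp hd h) hjT
        simp [hjT, hνz j hjS]
      · simp [hjT, hκz j hjT]
    have es : (∑ j, if j ∈ S then (ν + κ) j else 0) = k := by
      calc (∑ j, if j ∈ S then (ν + κ) j else 0) = ∑ j, ν j :=
          Finset.sum_congr rfl (fun j _ => congrFun e1 j)
        _ = k := hνs
    refine Sigma.ext es (heq_of_eq ?_)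
    rw [Prod.ext_iff]
    exact ⟨e1, e2⟩
  · -- summands agree
    intro μ hμ
    rw [mem_MM] at hμ
    obtain ⟨hsum, hpar, hsupp⟩ := hμ
    have hadd := restrict_add hd hsupp
    have hsum2 : (∑ j, if j ∈ S then μ j else 0) + (∑ j, if j ∈ T' then μ j else 0) = s := by
      rw [← Finset.sum_add_distrib]
      calc (∑ j, ((if j ∈ S then μ j else 0) + (if j ∈ T' then μ j else 0)))
          = ∑ j, μ j := Finset.sum_congr rfl (fun j _ => congrFun hadd j)
        _ = s := hsum
    have hc : (∏ i, c i ^ μ i) =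
        (∏ i, c i ^ (if i ∈ S then μ i else 0)) * (∏ i, c i ^ (if i ∈ T' then μ i else 0)) := by
      rw [← Finset.prod_mul_distrib]
      apply Finset.prod_congr rfl
      intro i _
      rw [← pow_add]
      congr 1
      exact (congrFun hadd i).symm
    have hT := TT_conv Adj S T' hd hsep s
      (fun j => if j ∈ S then μ j else 0) (fun j => if j ∈ T' then μ j else 0)
      (fun i hi => by simp [hi]) (fun i hi => by simp [hi]) hsum2
    rw [hadd] at hT
    have hκs : (∑ j, if j ∈ T' then μ j else 0) = s - (∑ j, if j ∈ S then μ j else 0) := by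
      omega
    rw [hκs] at hT
    rw [hT, hc]
    ring


lemma betaOn_empty_zero (y : Fin m → ZMod 2) (c : Fin m → ℝ) :
    betaOn m Adj (∅ : Finset (Fin m)) 0 y c = 1 := by
  classical
  have hMM : MM (∅ : Finset (Fin m)) 0 y = {fun _ => 0} := by
    ext μ
    rw [mem_MM, Finset.mem_singleton]
    constructor
    · rintro ⟨-, -, h⟩
      funext i
      exact h i (by simp)
    · rintro rfl
      exact ⟨by simp, by simp, by simp⟩
  rw [betaOn_eq, hMM, Finset.sum_singleton, TT_zero]
  simp

lemma betaOn_empty_pos {n : ℕ} (hn : n ≠ 0) (y : Fin m → ZMod 2) (c : Fin m → ℝ) :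
    betaOn m Adj (∅ : Finset (Fin m)) n y c = 0 := by
  classical
  have hMM : MM (∅ : Finset (Fin m)) n y = ∅ := by
    rw [Finset.eq_empty_iff_forall_notMem]
    intro μ hμ
    rw [mem_MM] at hμ
    obtain ⟨hs, -, hz⟩ := hμ
    apply hn
    rw [← hs]
    exact Finset.sum_eq_zero (fun i _ => hz i (by simp))
  rw [betaOn_eq, hMM, Finset.sum_empty]

noncomputable def Amat (l : ℕ) (y : Fin m → ZMod 2) (c : Fin m → ℝ) (S : Finset (Fin m)) :
    Matrix (Fin (l+1)) (Fin (l+1)) ℝ :=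
  Matrix.of fun i j : Fin (l + 1) =>
    if (i : ℕ) ≤ (j : ℕ) then
      (Nat.choose (j : ℕ) (i : ℕ) : ℝ) * betaOn m Adj S ((j : ℕ) - (i : ℕ)) y c
    else 0

lemma Amat_empty (l : ℕ) (y : Fin m → ZMod 2) (c : Fin m → ℝ) :
    Amat Adj l y c ∅ = 1 := by
  ext i j
  simp only [Amat, Matrix.of_apply, Matrix.one_apply]
  by_cases hij : i = j
  · subst hij
    simp [betaOn_empty_zero]
  · rw [if_neg hij]
    by_cases h : (i : ℕ) ≤ (j : ℕ)
    · have hlt : (i : ℕ) ≠ (j : ℕ) := fun he => hij (Fin.ext he)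
      rw [if_pos h, betaOn_empty_pos Adj (by omega), mul_zero]
    · rw [if_neg h]

lemma Amat_mul (l : ℕ) (y : Fin m → ZMod 2) (c : Fin m → ℝ) (S T' : Finset (Fin m))
    (hd : Disjoint S T') (hsep : ∀ i ∈ S, ∀ j ∈ T', ¬Adj i j ∧ ¬Adj j i) :
    Amat Adj l y c S * Amat Adj l y c T' = Amat Adj l y c (S ∪ T') := by
  ext i j
  rw [Matrix.mul_apply]
  simp only [Amat, Matrix.of_apply]
  by_cases hij : (i : ℕ) ≤ (j : ℕ)
  · rw [if_pos hij, betaOn_union Adj S T' hd hsep]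
    have h1 : ∀ kk : Fin (l+1),
        (if (i:ℕ) ≤ (kk:ℕ) then
            (Nat.choose (kk:ℕ) (i:ℕ) : ℝ) * betaOn m Adj S ((kk:ℕ)-(i:ℕ)) y c else 0) *
        (if (kk:ℕ) ≤ (j:ℕ) then
            (Nat.choose (j:ℕ) (kk:ℕ) : ℝ) * betaOn m Adj T' ((j:ℕ)-(kk:ℕ)) y c else 0)
        = (fun n : ℕ => if (i:ℕ) ≤ n ∧ n ≤ (j:ℕ) then
            ((Nat.choose n (i:ℕ) : ℝ) * betaOn m Adj S (n-(i:ℕ)) y c) *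
            ((Nat.choose (j:ℕ) n : ℝ) * betaOn m Adj T' ((j:ℕ)-n) y c) else 0) ((kk : ℕ)) := by
      intro kk
      by_cases ha : (i:ℕ) ≤ (kk:ℕ) <;> by_cases hb : (kk:ℕ) ≤ (j:ℕ) <;>
        simp [ha, hb]
    rw [Finset.sum_congr rfl (fun kk _ => h1 kk)]
    rw [Fin.sum_univ_eq_sum_range (fun n : ℕ => if (i:ℕ) ≤ n ∧ n ≤ (j:ℕ) then
            ((Nat.choose n (i:ℕ) : ℝ) * betaOn m Adj S (n-(i:ℕ)) y c) *
            ((Nat.choose (j:ℕ) n : ℝ) * betaOn m Adj T' ((j:ℕ)-n) y c) else 0) (l+1)]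
    rw [← Finset.sum_filter]
    have hfs : (Finset.range (l+1)).filter (fun n => (i:ℕ) ≤ n ∧ n ≤ (j:ℕ)) =
        Finset.Ico (i:ℕ) ((j:ℕ)+1) := by
      ext n
      simp only [Finset.mem_filter, Finset.mem_range, Finset.mem_Ico]
      have := j.isLt
      omega
    rw [hfs, Finset.sum_Ico_eq_sum_range]
    have hr : (j:ℕ) + 1 - (i:ℕ) = ((j:ℕ) - (i:ℕ)) + 1 := by omega
    rw [hr, Finset.mul_sum]
    apply Finset.sum_congr rfl
    intro p hp
    rw [Finset.mem_range] at hp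
    have e1 : (i:ℕ) + p - (i:ℕ) = p := by omega
    have e2 : (j:ℕ) - ((i:ℕ)+p) = (j:ℕ)-(i:ℕ)-p := by omega
    rw [e1, e2]
    have hch : (Nat.choose ((i:ℕ)+p) (i:ℕ) : ℝ) * (Nat.choose (j:ℕ) ((i:ℕ)+p) : ℝ)
        = (Nat.choose (j:ℕ) (i:ℕ) : ℝ) * (Nat.choose ((j:ℕ)-(i:ℕ)) p : ℝ) := by
      have h0 := Nat.choose_mul (n := (j:ℕ)) (k := (i:ℕ)+p) (s := (i:ℕ))
        (by omega)
      rw [e1] at h0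
      have h1 := congrArg (Nat.cast : ℕ → ℝ) h0
      push_cast at h1
      linarith
    linear_combination (betaOn m Adj S p y c * betaOn m Adj T' ((j:ℕ)-(i:ℕ)-p) y c) * hch
  · rw [if_neg hij]
    apply Finset.sum_eq_zero
    intro kk _
    by_cases ha : (i:ℕ) ≤ (kk:ℕ) <;> by_cases hb : (kk:ℕ) ≤ (j:ℕ) <;>
      first
        | (exact absurd (le_trans ha hb) hij)
        | simp [ha, hb]

lemma mem_foldr_union {L : List (Finset (Fin m))} {i : Fin m} :
    i ∈ L.foldr (· ∪ ·) ∅ ↔ ∃ S ∈ L, i ∈ S := by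
  induction L with
  | nil => simp
  | cons hd tl ih => simp [Finset.mem_union, ih]

lemma prod_Amat (l : ℕ) (y : Fin m → ZMod 2) (c : Fin m → ℝ) (L : List (Finset (Fin m)))
    (h : L.Pairwise (fun S T' => Disjoint S T' ∧ ∀ i ∈ S, ∀ j ∈ T', ¬Adj i j ∧ ¬Adj j i)) :
    (L.map (Amat Adj l y c)).prod = Amat Adj l y c (L.foldr (· ∪ ·) ∅) := by
  induction L with
  | nil => simp [Amat_empty]
  | cons hd tl ih =>
    rw [List.pairwise_cons] at h
    obtain ⟨hhd, htl⟩ := h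
    rw [List.map_cons, List.prod_cons, ih htl]
    have hdisj : Disjoint hd (tl.foldr (· ∪ ·) ∅) := by
      rw [Finset.disjoint_left]
      intro x hx hx2
      rw [mem_foldr_union] at hx2
      obtain ⟨S, hS, hxS⟩ := hx2
      exact (Finset.disjoint_left.mp (hhd S hS).1 hx) hxS
    have hsep2 : ∀ a ∈ hd, ∀ b ∈ tl.foldr (· ∪ ·) ∅, ¬Adj a b ∧ ¬Adj b a := by
      intro a ha b hb
      rw [mem_foldr_union] at hb
      obtain ⟨S, hS, hbS⟩ := hb
      exact (hhd S hS).2 a ha b hbS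
    rw [Amat_mul Adj l y c hd _ hdisj hsep2]
    rfl

lemma betaOn_univ (s : ℕ) (y : Fin m → ZMod 2) (c : Fin m → ℝ) :
    betaOn m Adj Finset.univ s y c = betaFn m Adj s y c := by
  rw [betaOn, betaFn]
  apply Finset.sum_congr ?_ (fun _ _ => rfl)
  apply Finset.filter_congr
  intro μ _
  simp

end Stmt15

/-- the amplitude identity underlying the MPS form of the reference
state `|R_*^l(H)⟩` for noncommuting Hamiltonians: the product of the block transfer
matrices, contracted with `e₀` and the coefficient vector `a`, reproduces
`Σ_s a_s β_G^{(s)}(y,c)`. -/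
theorem stmt_15 (m r l : ℕ) (Adj : Fin m → Fin m → Prop) [DecidableRel Adj]
    (hsymm : ∀ i j, Adj i j → Adj j i)
    (hirr : ∀ i, ¬Adj i i)
    (V : Fin r → Finset (Fin m))
    (hdisj : ∀ t t', t ≠ t' → Disjoint (V t) (V t'))
    (hcover : Finset.univ.biUnion V = Finset.univ)
    (hsep : ∀ t t', t ≠ t' → ∀ i ∈ V t, ∀ j ∈ V t', ¬Adj i j)
    (c : Fin m → ℝ) (a : ℕ → ℝ) (y : Fin m → ZMod 2) :
    (((List.ofFn fun t : Fin r =>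
          Matrix.of fun i j : Fin (l + 1) =>
            if (i : ℕ) ≤ (j : ℕ) then
              (Nat.choose (j : ℕ) (i : ℕ) : ℝ) *
                betaOn m Adj (V t) ((j : ℕ) - (i : ℕ)) y c
            else 0).prod).mulVec
        (fun s : Fin (l + 1) => a s)) 0 =
      ∑ s ∈ Finset.range (l + 1), a s * betaFn m Adj s y c := by
  classical
  have hAmat : (fun t : Fin r =>
      Matrix.of fun i j : Fin (l + 1) =>
        if (i : ℕ) ≤ (j : ℕ) then
          (Nat.choose (j : ℕ) (i : ℕ) : ℝ) *
            betaOn m Adj (V t) ((j : ℕ) - (i : ℕ)) y c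
        else 0) = (Stmt15.Amat Adj l y c) ∘ V := rfl
  rw [hAmat, ← List.map_ofFn]
  have hpair : (List.ofFn V).Pairwise
      (fun S T' => Disjoint S T' ∧ ∀ i ∈ S, ∀ j ∈ T', ¬Adj i j ∧ ¬Adj j i) := by
    rw [List.pairwise_ofFn]
    intro t t' htt
    have hne : t ≠ t' := ne_of_lt htt
    exact ⟨hdisj t t' hne, fun i hi j hj =>
      ⟨hsep t t' hne i hi j hj, hsep t' t hne.symm j hj i hi⟩⟩
  rw [Stmt15.prod_Amat Adj l y c (List.ofFn V) hpair]
  have hfold : (List.ofFn V).foldr (· ∪ ·) ∅ = Finset.univ := by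
    ext i
    rw [Stmt15.mem_foldr_union]
    simp only [List.mem_ofFn]
    constructor
    · intro _
      exact Finset.mem_univ i
    · intro _
      have h1 : i ∈ Finset.univ.biUnion V := by rw [hcover]; exact Finset.mem_univ i
      rw [Finset.mem_biUnion] at h1
      obtain ⟨t, -, ht⟩ := h1
      exact ⟨V t, ⟨t, rfl⟩, ht⟩
  rw [hfold]
  simp only [Matrix.mulVec, dotProduct, Stmt15.Amat, Matrix.of_apply]
  have h0 : ((0 : Fin (l+1)) : ℕ) = 0 := rfl
  have hterm : ∀ j : Fin (l+1),
      (if ((0 : Fin (l+1)) : ℕ) ≤ (j : ℕ) then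
          (Nat.choose (j:ℕ) ((0 : Fin (l+1)) : ℕ) : ℝ) *
            betaOn m Adj Finset.univ ((j:ℕ) - ((0 : Fin (l+1)) : ℕ)) y c
        else 0) * a (j : ℕ)
      = (fun n : ℕ => a n * betaFn m Adj n y c) ((j : ℕ)) := by
    intro j
    rw [h0, if_pos (Nat.zero_le _), Nat.choose_zero_right, Nat.sub_zero,
      Stmt15.betaOn_univ]
    push_cast
    ring
  rw [Finset.sum_congr rfl (fun j _ => hterm j)]
  rw [Fin.sum_univ_eq_sum_range (fun n : ℕ => a n * betaFn m Adj n y c) (l+1)]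
end
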